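/- arXiv:1606.02541 — 9 statements merged into one kernel-verified Lean document; each statement's English description precedes it below -/
import Mathlib

section
/- Let C be a maximum rank distance (MRD) code in the space of m×n matrices over F_q with minimum distance d, where m ≤ n. Then for every nonzero row vector x in F_q^m and every row vector y in F_q^n, there exists at least one matrix M in C such that xM = y. -/
/-!
Since `d ≥ 1` is the rank of a nonzero difference, `x` extends to `k = m - d + 1` linearly
independent vectors, the rows of a `k × m` matrix `U`.
If `U (A - B) = 0` then `rank (A - B) ≤ m - k < d`, so `M ↦ U M` is injective on `C`; as
`#C = q ^ (n k) = #F^{k×n}` it is onto, and a preimage of the matrix with first row `y` and all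
other rows zero is the required `M`.
-/

theorem Matrix.rank_eq_zero_iff {R m n : Type*} [Field R] [Fintype n] {A : Matrix m n R} :
    A.rank = 0 ↔ A = 0 := by
  have := FiniteDimensional.span_of_finite R (Set.finite_range A.col)
  rw [rank_eq_finrank_span_cols, Submodule.finrank_eq_zero, Submodule.span_eq_bot,
    Set.forall_mem_range]
  exact ⟨fun h => ext fun i j => congrFun (h j) i, fun h j => by subst h; rfl⟩

theorem Nat.card_matrix (R m n : Type*) [Finite m] [Finite n] :
    Nat.card (Matrix m n R) = Nat.card R ^ (Nat.card m * Nat.card n) := by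
  rw [Matrix, Nat.card_fun, Nat.card_fun, ← pow_mul, mul_comm]

theorem exists_linearIndependent_fin_succ_zero_eq {K V : Type*} [DivisionRing K] [AddCommGroup V]
    [Module K V] {x : V} (hx : x ≠ 0) :
    ∀ {k : ℕ}, k < Module.finrank K V → ∃ v : Fin (k + 1) → V, LinearIndependent K v ∧ v 0 = x
  | 0, _ => ⟨![x], .of_subsingleton (ι := Fin 1) 0 hx, rfl⟩
  | k + 1, hk => by
    obtain ⟨v, hv, hv0⟩ :=
      exists_linearIndependent_fin_succ_zero_eq (K := K) hx (k := k) (by omega)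
    obtain ⟨w, hw⟩ := exists_linearIndependent_snoc_of_lt_finrank hv hk
    exact ⟨Fin.snoc v w, hw, (Fin.snoc_castSucc (i := 0) ..).trans hv0⟩

namespace Matrix

variable {F ι m n : Type*} [Field F] [Fintype m] [Fintype n] {C : Set (Matrix m n F)} {d : ℕ}
  {U : Matrix ι m F}

theorem injOn_mul_left_of_card_lt_rank_add [Finite ι]
    (hdist : ∀ A ∈ C, ∀ B ∈ C, A ≠ B → d ≤ (A - B).rank) (hU : Fintype.card m < U.rank + d) :
    Set.InjOn (U * ·) C := by
  intro A hA B hB hAB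
  by_contra hne
  have hker : U * (A - B) = 0 := by rw [Matrix.mul_sub, sub_eq_zero]; exact hAB
  have := rank_add_rank_le_card_of_mul_eq_zero hker
  have := hdist A hA B hB hne
  omega

theorem exists_mem_mul_eq_of_natCard_le [Finite F] [Finite ι]
    (hdist : ∀ A ∈ C, ∀ B ∈ C, A ≠ B → d ≤ (A - B).rank) (hU : Fintype.card m < U.rank + d)
    (hC : Nat.card (Matrix ι n F) ≤ C.ncard) (Y : Matrix ι n F) : ∃ M ∈ C, U * M = Y := by
  have hinj := injOn_mul_left_of_card_lt_rank_add hdist hU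
  have himage : (U * ·) '' C = Set.univ :=
    Set.eq_of_subset_of_ncard_le (Set.subset_univ _) (by rwa [Set.ncard_univ, hinj.ncard_image])
  exact (himage ▸ Set.mem_univ Y : Y ∈ (U * ·) '' C)

end Matrix

open Matrix

theorem mrd_covering_general {q m n d : ℕ} {F : Type*} [Field F] [Fintype F]
    (hq : Fintype.card F = q)
    (C : Set (Matrix (Fin m) (Fin n) F))
    (hdist : ∀ A ∈ C, ∀ B ∈ C, A ≠ B → d ≤ (A - B).rank)
    (hattain : ∃ A ∈ C, ∃ B ∈ C, A ≠ B ∧ (A - B).rank = d)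
    (hMRD : C.ncard = q ^ (n * (m - d + 1))) :
    ∀ x : Fin m → F, x ≠ 0 → ∀ y : Fin n → F, ∃ M ∈ C, Matrix.vecMul x M = y := by
  intro x hx y
  obtain ⟨A, -, B, -, hAB, rfl⟩ := hattain
  have hd : 0 < (A - B).rank :=
    Nat.pos_of_ne_zero (rank_eq_zero_iff.not.mpr (sub_ne_zero.mpr hAB))
  obtain ⟨i, -⟩ := Function.ne_iff.mp hx
  have hm : 0 < m := i.pos
  obtain ⟨U, hU, rfl⟩ := exists_linearIndependent_fin_succ_zero_eq hx
    (k := m - (A - B).rank) (by rw [Module.finrank_fin_fun]; omega)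
  obtain ⟨M, hM, hUM⟩ := exists_mem_mul_eq_of_natCard_le (U := of U) hdist
    (by rw [hU.rank_matrix (M := of U)]; simp only [Fintype.card_fin]; omega)
    (by rw [Nat.card_matrix, hMRD, ← hq]; simp [mul_comm]) (updateRow 0 0 y)
  exact ⟨M, hM, (congrFun hUM 0).trans updateRow_self⟩

/-- Let `C` be an MRD code in `F_q^{m×n}` (`m ≤ n`) with minimum distance `d`.
Then for every nonzero row vector `x ∈ F_q^m` and every `y ∈ F_q^n` there is `M ∈ C`
with `x M = y`. -/
theorem mrd_covering {q m n d : ℕ} {F : Type*} [Field F] [Fintype F]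
    (hq : Fintype.card F = q)
    (C : Set (Matrix (Fin m) (Fin n) F)) (hmn : m ≤ n)
    (hdist : ∀ A ∈ C, ∀ B ∈ C, A ≠ B → d ≤ (A - B).rank)
    (hattain : ∃ A ∈ C, ∃ B ∈ C, A ≠ B ∧ (A - B).rank = d)
    (hMRD : C.ncard = q ^ (n * (m - d + 1))) :
    ∀ x : Fin m → F, x ≠ 0 → ∀ y : Fin n → F, ∃ M ∈ C, Matrix.vecMul x M = y :=
  mrd_covering_general hq C hdist hattain hMRD
end

section
/- Let C be an MRD code in F_q^{m×n} containing the zero matrix, such that gcd(m,n) = 1 or the minimum distance d < min{m,n}. Then the kernel of the translation structure T(C) is isomorphic to F_q. -/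
/-!
View an element of the kernel as a pair `(g, f)` of additive maps with `f (x M) = g(x) M` for
all `M ∈ C`; these pairs form a finite ring containing the scalars `F`. For `m ≤ n` an MRD code
is systematic: restriction to any subspace of dimension `m - d + 1` is a bijection from `C` onto
all linear maps, so `x ↦ x M` (`M ∈ C`) is onto `F^n` for each `x ≠ 0`. This makes the kernel a
domain, hence a finite field `K` of order `q^r`. Every `M ∈ C` is then `K`-linear, so `r` divides
`m`, `n` and every rank, in particular `d`. If `gcd(m, n) = 1` this gives `r = 1`; if `d < m`, the
Singleton bound over `K` reads `q^(n(m-d+1)) ≤ q^(n(m-d+r)/r)`, which again forces `r = 1`. The case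
`m > n` reduces to `m < n` by transposition: adjoints with respect to the trace form
`tr(x ⬝ y)` over the prime field send the kernel of `C` to the kernel of `Cᵀ`.
-/

open Matrix LinearMap Module

section Singleton

variable {K V W ι : Type*} [Field K] [AddCommGroup V] [Module K V] [AddCommGroup W] [Module K W]

theorem Submodule.exists_mem_finrank_eq [FiniteDimensional K V] {x : V} (hx : x ≠ 0) {k : ℕ}
    (hk : 1 ≤ k) (hkV : k ≤ finrank K V) : ∃ U : Submodule K V, x ∈ U ∧ finrank K U = k := by
  induction k, hk using Nat.le_induction with
  | base => exact ⟨K ∙ x, mem_span_singleton_self x, finrank_span_singleton hx⟩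
  | succ k _ ih =>
    obtain ⟨U, hxU, hU⟩ := ih (by omega)
    obtain ⟨v, -, hv⟩ := SetLike.exists_of_lt (lt_top_of_finrank_lt_finrank (by omega) : U < ⊤)
    exact ⟨U ⊔ K ∙ v, mem_sup_left hxU, by rw [finrank_sup_span_singleton hv, hU]⟩

theorem natCard_linearMap [Finite K] [FiniteDimensional K V] [FiniteDimensional K W] :
    Nat.card (V →ₗ[K] W) = Nat.card K ^ (finrank K V * finrank K W) := by
  rw [natCard_eq_pow_finrank (K := K), finrank_linearMap]

variable [FiniteDimensional K V] {φ : ι → V →ₗ[K] W} {e : ℕ}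

theorem injective_domRestrict_of_le_finrank_range_sub
    (hφ : ∀ i j, i ≠ j → e ≤ finrank K (range (φ i - φ j)))
    {U : Submodule K V} (hU : finrank K V < finrank K U + e) :
    Function.Injective fun i => (φ i).domRestrict U := by
  intro i j hij
  by_contra hne
  have hker : U ≤ ker (φ i - φ j) := fun u hu => by
    simpa [sub_eq_zero] using LinearMap.congr_fun hij ⟨u, hu⟩
  have := finrank_range_add_finrank_ker (φ i - φ j)
  have := Submodule.finrank_mono hker
  have := hφ i j hne
  omega

variable [Finite K] [FiniteDimensional K W]

theorem natCard_le_of_le_finrank_range_sub (he : 0 < e) (heV : e ≤ finrank K V)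
    (hφ : ∀ i j, i ≠ j → e ≤ finrank K (range (φ i - φ j))) :
    Nat.card ι ≤ Nat.card K ^ ((finrank K V - e + 1) * finrank K W) := by
  obtain ⟨x, hx⟩ := (finrank_pos_iff_exists_ne_zero (R := K)).mp (he.trans_le heV)
  obtain ⟨U, -, hU⟩ := Submodule.exists_mem_finrank_eq hx (by omega)
    (by omega : finrank K V - e + 1 ≤ finrank K V)
  have := Module.finite_of_finite K (M := U →ₗ[K] W)
  rw [← hU, ← natCard_linearMap]
  exact Nat.card_le_card_of_injective _
    (injective_domRestrict_of_le_finrank_range_sub hφ (by omega))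

theorem exists_apply_eq_of_natCard_eq (he : 0 < e) (heV : e ≤ finrank K V)
    (hφ : ∀ i j, i ≠ j → e ≤ finrank K (range (φ i - φ j)))
    (hcard : Nat.card ι = Nat.card K ^ ((finrank K V - e + 1) * finrank K W))
    {x : V} (hx : x ≠ 0) (y : W) : ∃ i, φ i x = y := by
  obtain ⟨U, hxU, hU⟩ := Submodule.exists_mem_finrank_eq hx (by omega)
    (by omega : finrank K V - e + 1 ≤ finrank K V)
  have : Finite ι := Nat.finite_of_card_ne_zero (hcard ▸ pow_ne_zero _ Nat.card_pos.ne')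
  have := Module.finite_of_finite K (M := U →ₗ[K] W)
  have hbij : Function.Bijective fun i => (φ i).domRestrict U := by
    rw [Nat.bijective_iff_injective_and_card, natCard_linearMap, hU, hcard]
    exact ⟨injective_domRestrict_of_le_finrank_range_sub hφ (by omega), rfl⟩
  obtain ⟨f, hf⟩ := Projective.exists_dual_eq_one K (show (⟨x, hxU⟩ : U) ≠ 0 by simpa using hx)
  obtain ⟨i, hi⟩ := hbij.2 (f.smulRight y)
  exact ⟨i, by simpa [hf] using LinearMap.congr_fun hi ⟨x, hxU⟩⟩

end Singleton

section ExtensionField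

variable {F K : Type*} [Field F] [Finite F]

/-- No compatibility between the two actions is needed: both sides count the same finite set. -/
theorem finrank_eq_finrank_mul_finrank_of_coe_eq [DivisionRing K] [Finite K] [Module F K]
    {V : Type*} [AddCommGroup V] [Module F V] [Module K V] [Finite V]
    {P : Submodule F V} {Q : Submodule K V} (h : (P : Set V) = Q) :
    finrank F P = finrank F K * finrank K Q := by
  apply Nat.pow_right_injective (Finite.one_lt_card (α := F))
  simp only [pow_mul, ← natCard_eq_pow_finrank]
  exact Nat.card_congr (Equiv.setCongr h)

theorem finrank_eq_finrank_mul_finrank_of_finite [DivisionRing K] [Finite K] [Module F K]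
    {V : Type*} [AddCommGroup V] [Module F V] [Module K V] [Finite V] :
    finrank F V = finrank F K * finrank K V := by
  simpa using finrank_eq_finrank_mul_finrank_of_coe_eq
    (P := (⊤ : Submodule F V)) (Q := (⊤ : Submodule K V)) rfl

theorem finrank_eq_one_of_mrd_of_linear [Field K] [Finite K] [Module F K]
    {V W ι : Type*} [AddCommGroup V] [Module F V] [Module K V] [Finite V]
    [AddCommGroup W] [Module F W] [Module K W] [Finite W]
    (ψ : ι → V →ₗ[F] W) (φ : ι → V →ₗ[K] W) (hφψ : ∀ i x, φ i x = ψ i x) {d : ℕ} (hd : 0 < d)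
    (hψ : ∀ i j, i ≠ j → d ≤ finrank F (range (ψ i - ψ j)))
    (hattain : ∃ i j, i ≠ j ∧ finrank F (range (ψ i - ψ j)) = d)
    (hcard : Nat.card ι = Nat.card F ^ ((finrank F V - d + 1) * finrank F W))
    (hcond : (finrank F V).gcd (finrank F W) = 1 ∨ d < finrank F V) :
    finrank F K = 1 := by
  have hrank (i j : ι) :
      finrank F (range (ψ i - ψ j)) = finrank F K * finrank K (range (φ i - φ j)) :=
    finrank_eq_finrank_mul_finrank_of_coe_eq <| Set.ext fun _ => by
      simp only [coe_range, Set.mem_range, LinearMap.sub_apply, hφψ]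
  have hV : finrank F V = finrank F K * finrank K V := finrank_eq_finrank_mul_finrank_of_finite
  have hW : finrank F W = finrank F K * finrank K W := finrank_eq_finrank_mul_finrank_of_finite
  have hK : Nat.card K = Nat.card F ^ finrank F K := natCard_eq_pow_finrank
  set r := finrank F K
  have hr : 0 < r := finrank_pos
  obtain ⟨i₀, j₀, -, hd₀⟩ := hattain
  obtain ⟨e, rfl⟩ : r ∣ d := ⟨_, hd₀ ▸ hrank i₀ j₀⟩
  rcases hcond with hgcd | hlt
  · exact Nat.dvd_one.mp (hgcd ▸ Nat.dvd_gcd ⟨_, hV⟩ ⟨_, hW⟩)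
  have he : 0 < e := Nat.pos_of_mul_pos_left hd
  have hem : e < finrank K V := Nat.lt_of_mul_lt_mul_left (hV ▸ hlt)
  have hn : 0 < finrank K W := he.trans_le <|
    Nat.le_of_mul_le_mul_left ((hd₀ ▸ Submodule.finrank_le _).trans_eq hW) hr
  have hb := natCard_le_of_le_finrank_range_sub (φ := φ) he hem.le fun i j hij =>
    Nat.le_of_mul_le_mul_left (hrank i j ▸ hψ i j hij) hr
  rw [hcard, hK, ← pow_mul, hV, hW, ← Nat.mul_sub,
    Nat.pow_le_pow_iff_right Finite.one_lt_card] at hb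
  have ht : 0 < finrank K V - e := by omega
  generalize finrank K V - e = t at hb ht
  have := Nat.le_of_mul_le_mul_right (c := r * finrank K W)
    (hb.trans_eq (by ring : r * ((t + 1) * finrank K W) = (t + 1) * (r * finrank K W)))
    (mul_pos hr hn)
  nlinarith

end ExtensionField

namespace Matrix

variable {R l o : Type*} [Field R] [Fintype l] [Fintype o]

theorem rank_pos_of_ne_zero {A : Matrix l o R} (hA : A ≠ 0) : 0 < A.rank := by
  rw [Nat.pos_iff_ne_zero, rank_eq_finrank_span_row, Ne, Submodule.finrank_eq_zero,
    Submodule.span_eq_bot]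
  exact fun h => hA (funext fun i => h _ ⟨i, rfl⟩)

theorem finrank_range_vecMulLinear_sub (A B : Matrix l o R) :
    finrank R (range (A.vecMulLinear - B.vecMulLinear)) = (A - B).rank := by
  have : A.vecMulLinear - B.vecMulLinear = (A - B).vecMulLinear :=
    LinearMap.ext fun x => (vecMul_sub A B x).symm
  rw [this, range_vecMulLinear, rank_eq_finrank_span_row]

end Matrix

section RankMetricCode

variable {F : Type*} [Field F] [Fintype F] {m n : ℕ}

structure IsMRDCode (C : Set (Matrix (Fin m) (Fin n) F)) (d : ℕ) : Prop where
  le_rank_sub : ∀ A ∈ C, ∀ B ∈ C, A ≠ B → d ≤ (A - B).rank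
  exists_rank_sub_eq : ∃ A ∈ C, ∃ B ∈ C, A ≠ B ∧ (A - B).rank = d
  ncard_eq : C.ncard = Fintype.card F ^ (max m n * (min m n - d + 1))

namespace IsMRDCode

variable {C : Set (Matrix (Fin m) (Fin n) F)} {d : ℕ}

theorem pos (hC : IsMRDCode C d) : 0 < d := by
  obtain ⟨A, -, B, -, hAB, rfl⟩ := hC.exists_rank_sub_eq
  exact rank_pos_of_ne_zero (sub_ne_zero.mpr hAB)

theorem le_height (hC : IsMRDCode C d) : d ≤ m := by
  obtain ⟨A, -, B, -, -, rfl⟩ := hC.exists_rank_sub_eq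
  exact rank_le_height _

theorem transpose (hC : IsMRDCode C d) : IsMRDCode (Matrix.transpose '' C) d where
  le_rank_sub := by
    rintro _ ⟨A, hA, rfl⟩ _ ⟨B, hB, rfl⟩ hAB
    rw [← transpose_sub, rank_transpose]
    exact hC.le_rank_sub A hA B hB (ne_of_apply_ne _ hAB)
  exists_rank_sub_eq := by
    obtain ⟨A, hA, B, hB, hAB, hd⟩ := hC.exists_rank_sub_eq
    exact ⟨Aᵀ, ⟨A, hA, rfl⟩, Bᵀ, ⟨B, hB, rfl⟩, transpose_injective.ne hAB,
      by rw [← transpose_sub, rank_transpose, hd]⟩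
  ncard_eq := by
    rw [Set.ncard_image_of_injective _ transpose_injective, hC.ncard_eq, max_comm, min_comm]

theorem le_finrank_range_sub (hC : IsMRDCode C d) {A B : C} (hAB : A ≠ B) :
    d ≤ finrank F (range ((A : Matrix (Fin m) (Fin n) F).vecMulLinear -
      (B : Matrix (Fin m) (Fin n) F).vecMulLinear)) := by
  rw [finrank_range_vecMulLinear_sub]
  exact hC.le_rank_sub A A.2 B B.2 (Subtype.coe_injective.ne hAB)

theorem natCard_eq (hC : IsMRDCode C d) (hmn : m ≤ n) :
    Nat.card C = Nat.card F ^ ((finrank F (Fin m → F) - d + 1) * finrank F (Fin n → F)) := by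
  rw [Nat.card_coe_set_eq, hC.ncard_eq, max_eq_right hmn, min_eq_left hmn,
    Nat.card_eq_fintype_card, finrank_fin_fun, finrank_fin_fun, mul_comm]

theorem exists_vecMul_eq (hC : IsMRDCode C d) (hmn : m ≤ n) {x : Fin m → F} (hx : x ≠ 0)
    (y : Fin n → F) : ∃ M ∈ C, x ᵥ* M = y := by
  let φ : C → (Fin m → F) →ₗ[F] (Fin n → F) := fun M => (M : Matrix (Fin m) (Fin n) F).vecMulLinear
  have hdm : d ≤ finrank F (Fin m → F) := by rw [finrank_fin_fun]; exact hC.le_height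
  obtain ⟨M, hM⟩ := exists_apply_eq_of_natCard_eq (φ := φ) hC.pos hdm
    (fun _ _ => hC.le_finrank_range_sub) (hC.natCard_eq hmn) hx y
  exact ⟨M, M.2, hM⟩

end IsMRDCode

end RankMetricCode

section Kernel

variable {F : Type*} [Field F] {m n : ℕ} (C : Set (Matrix (Fin m) (Fin n) F))

/-- The kernel of `T(C)`. An endomorphism stabilizing `S(∞)` and `S(0)` is a product `g × f`,
and it stabilizes `S(M) = {(x, x M)}` iff `f (x M) = g(x) M`. -/
def kernelSubring : Subring (AddMonoid.End (Fin m → F) × AddMonoid.End (Fin n → F)) where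
  carrier := {p | ∀ M ∈ C, ∀ x, p.2 (x ᵥ* M) = p.1 x ᵥ* M}
  mul_mem' {p q} hp hq M hM x := by
    show p.2 (q.2 (x ᵥ* M)) = p.1 (q.1 x) ᵥ* M
    rw [hq M hM, hp M hM]
  one_mem' _ _ _ := rfl
  add_mem' {p q} hp hq M hM x := by
    show p.2 (x ᵥ* M) + q.2 (x ᵥ* M) = (p.1 x + q.1 x) ᵥ* M
    rw [hp M hM, hq M hM, add_vecMul]
  zero_mem' _ _ _ := by simp
  neg_mem' {p} hp M hM x := by
    show -p.2 (x ᵥ* M) = (-p.1 x) ᵥ* M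
    rw [hp M hM, neg_vecMul]

def kernelSubring.scalarHom : F →+* kernelSubring C :=
  ((Module.toAddMonoidEnd F (Fin m → F)).prod (Module.toAddMonoidEnd F (Fin n → F))).codRestrict _
    fun a _ _ x => (smul_vecMul a x _).symm

instance [Finite F] : Finite (kernelSubring C) :=
  have : Finite (AddMonoid.End (Fin m → F)) := .of_injective _ DFunLike.coe_injective
  have : Finite (AddMonoid.End (Fin n → F)) := .of_injective _ DFunLike.coe_injective
  inferInstance

variable {C}

namespace kernelSubring

theorem eq_zero_of_fst_apply_eq_zero [NeZero n]
    (hsurj : ∀ x : Fin m → F, x ≠ 0 → ∀ y, ∃ M ∈ C, x ᵥ* M = y) {p} (hp : p ∈ kernelSubring C)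
    {x : Fin m → F} (hx : x ≠ 0) (hpx : p.1 x = 0) : p = 0 := by
  have hf : p.2 = 0 := DFunLike.ext _ _ fun y => by
    obtain ⟨M, hM, rfl⟩ := hsurj x hx y
    rw [hp M hM x, hpx, zero_vecMul, AddMonoid.End.zero_apply]
  have hg : p.1 = 0 := DFunLike.ext _ _ fun x' => by
    by_contra hx'
    obtain ⟨y, hy⟩ := exists_ne (0 : Fin n → F)
    obtain ⟨M, hM, rfl⟩ := hsurj _ hx' y
    exact hy (by rw [← hp M hM x', hf, AddMonoid.End.zero_apply])
  exact Prod.ext hg hf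

theorem isDomain [NeZero m] [NeZero n]
    (hsurj : ∀ x : Fin m → F, x ≠ 0 → ∀ y, ∃ M ∈ C, x ᵥ* M = y) : IsDomain (kernelSubring C) := by
  obtain ⟨x, hx⟩ := exists_ne (0 : Fin m → F)
  have : Nontrivial (kernelSubring C) := ⟨1, 0, fun h => hx (by
    simpa using congr($(congrArg (fun p : kernelSubring C => p.1.1) h) x))⟩
  have : NoZeroDivisors (kernelSubring C) := ⟨fun {a b} hab => by
    by_cases hb : b.1.1 x = 0
    · exact Or.inr (Subtype.ext (eq_zero_of_fst_apply_eq_zero hsurj b.2 hx hb))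
    · exact Or.inl (Subtype.ext (eq_zero_of_fst_apply_eq_zero hsurj a.2 hb
        (congrArg (fun p : kernelSubring C => p.1.1 x) hab)))⟩
  exact NoZeroDivisors.to_isDomain _

end kernelSubring

theorem IsMRDCode.scalarHom_surjective [Fintype F] {d : ℕ} (hC : IsMRDCode C d) (hmn : m ≤ n)
    (hcond : m.gcd n = 1 ∨ d < m) : Function.Surjective (kernelSubring.scalarHom C) := by
  have : NeZero m := ⟨(hC.pos.trans_le hC.le_height).ne'⟩
  have : NeZero n := ⟨(hC.pos.trans_le (hC.le_height.trans hmn)).ne'⟩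
  let K := kernelSubring C
  have := kernelSubring.isDomain fun x => hC.exists_vecMul_eq hmn (x := x)
  let : Field K := (Finite.isDomain_to_isField K).toField
  let : Module K (Fin m → F) := Module.compHom _ ((RingHom.fst _ _).comp K.subtype)
  let : Module K (Fin n → F) := Module.compHom _ ((RingHom.snd _ _).comp K.subtype)
  let : Module F K := Module.compHom K (kernelSubring.scalarHom C)
  let ψ : C → (Fin m → F) →ₗ[F] (Fin n → F) := fun M => (M : Matrix (Fin m) (Fin n) F).vecMulLinear
  let φ : C → (Fin m → F) →ₗ[K] (Fin n → F) := fun M =>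
    { toFun x := x ᵥ* M
      map_add' x y := add_vecMul _ x y
      map_smul' k x := (k.2 M M.2 x).symm }
  have hattain : ∃ A B : C, A ≠ B ∧ finrank F (range (ψ A - ψ B)) = d := by
    obtain ⟨A, hA, B, hB, hAB, hd⟩ := hC.exists_rank_sub_eq
    exact ⟨⟨A, hA⟩, ⟨B, hB⟩, by simpa using hAB, (finrank_range_vecMulLinear_sub A B).trans hd⟩
  have hK := finrank_eq_one_of_mrd_of_linear ψ φ (fun _ _ => rfl) hC.pos
    (fun _ _ => hC.le_finrank_range_sub) hattain (hC.natCard_eq hmn)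
    (by simpa only [finrank_fin_fun])
  refine ((Nat.bijective_iff_injective_and_card _).mpr
    ⟨(kernelSubring.scalarHom C).injective, ?_⟩).2
  rw [natCard_eq_pow_finrank (K := F) (V := K), hK, pow_one]

theorem IsMRDCode.exists_smul_of_mem_kernelSubring_of_le [Fintype F] {d : ℕ}
    (hC : IsMRDCode C d) (hmn : m ≤ n) (hcond : m.gcd n = 1 ∨ d < m) {p}
    (hp : p ∈ kernelSubring C) : ∃ a : F, (∀ x, p.1 x = a • x) ∧ ∀ y, p.2 y = a • y := by
  obtain ⟨a, ha⟩ := hC.scalarHom_surjective hmn hcond ⟨p, hp⟩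
  exact ⟨a, fun x => (congrArg (fun q : kernelSubring C => q.1.1 x) ha).symm,
    fun y => (congrArg (fun q : kernelSubring C => q.1.2 y) ha).symm⟩

theorem exists_mem_kernelSubring_of_stabilizes (h0 : 0 ∈ C)
    {μ : ((Fin m → F) × (Fin n → F)) →+ ((Fin m → F) × (Fin n → F))}
    (hinf : ∀ y, ∃ y', μ (0, y) = (0, y'))
    (hC : ∀ M ∈ C, ∀ x, ∃ x', μ (x, x ᵥ* M) = (x', x' ᵥ* M)) :
    ∃ p ∈ kernelSubring C, ∀ v, μ v = (p.1 v.1, p.2 v.2) := by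
  let g : AddMonoid.End (Fin m → F) := (AddMonoidHom.fst _ _).comp (μ.comp (AddMonoidHom.inl _ _))
  let f : AddMonoid.End (Fin n → F) := (AddMonoidHom.snd _ _).comp (μ.comp (AddMonoidHom.inr _ _))
  have hμ (v : (Fin m → F) × (Fin n → F)) : μ v = (g v.1, f v.2) := by
    obtain ⟨y', hy'⟩ := hinf v.2
    obtain ⟨x', hx'⟩ := hC 0 h0 v.1
    simp only [vecMul_zero] at hx'
    have hg : g v.1 = x' := congrArg Prod.fst hx'
    have hf : f v.2 = y' := congrArg Prod.snd hy'
    calc μ v = μ (v.1, 0) + μ (0, v.2) := by rw [← map_add, Prod.mk_add_mk, add_zero, zero_add]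
      _ = (g v.1, f v.2) := by rw [hx', hy', hg, hf, Prod.mk_add_mk, add_zero, zero_add]
  refine ⟨(g, f), fun M hM x => ?_, hμ⟩
  obtain ⟨x', hx'⟩ := hC M hM x
  obtain ⟨h1, h2⟩ := Prod.mk.inj ((hμ (x, x ᵥ* M)).symm.trans hx')
  rw [h2, h1]

end Kernel

section TraceDuality

variable {F : Type*} [Field F] [Finite F] [Algebra (ZMod (ringChar F)) F]

local notation "Tr" => Algebra.trace (ZMod (ringChar F)) F

theorem eq_zero_of_forall_trace_dotProduct_eq_zero {ι : Type*} [Fintype ι] [DecidableEq ι]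
    {x : ι → F} (h : ∀ y, Tr (x ⬝ᵥ y) = 0) : x = 0 := by
  funext j
  by_contra hj
  obtain ⟨b, hb⟩ := FiniteField.trace_to_zmod_nondegenerate F hj
  exact hb (by simpa [dotProduct_single] using h (Pi.single j b))

theorem eq_of_forall_trace_dotProduct_eq {ι : Type*} [Fintype ι] {x x' : ι → F}
    (h : ∀ y, Tr (x ⬝ᵥ y) = Tr (x' ⬝ᵥ y)) : x = x' := by
  classical
  exact sub_eq_zero.mp (eq_zero_of_forall_trace_dotProduct_eq_zero fun y => by
    rw [sub_dotProduct, map_sub, h, sub_self])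

theorem exists_trace_dotProduct_adjoint [Fact (ringChar F).Prime] {ι : Type*} [Fintype ι]
    (h : AddMonoid.End (ι → F)) :
    ∃ h' : AddMonoid.End (ι → F), ∀ x y, Tr (h x ⬝ᵥ y) = Tr (x ⬝ᵥ h' y) := by
  classical
  let B : LinearMap.BilinForm (ZMod (ringChar F)) (ι → F) :=
    (dotProductBilin (ZMod (ringChar F)) (ZMod (ringChar F))).compr₂ Tr
  have hB : B.Nondegenerate :=
    .ofSeparatingLeft fun x hx => eq_zero_of_forall_trace_dotProduct_eq_zero hx
  refine ⟨(B.leftAdjointOfNondegenerate hB (h.toZModLinearMap _)).toAddMonoidHom, fun x y => ?_⟩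
  rw [dotProduct_comm, dotProduct_comm x]
  exact (B.isAdjointPairLeftAdjointOfNondegenerate hB (h.toZModLinearMap _) y x).symm

theorem mem_kernelSubring_transpose {m n : ℕ} {C : Set (Matrix (Fin m) (Fin n) F)}
    {g g' : AddMonoid.End (Fin m → F)} {f f' : AddMonoid.End (Fin n → F)}
    (hg : ∀ x y, Tr (g x ⬝ᵥ y) = Tr (x ⬝ᵥ g' y)) (hf : ∀ x y, Tr (f x ⬝ᵥ y) = Tr (x ⬝ᵥ f' y))
    (hp : (g, f) ∈ kernelSubring C) : (f', g') ∈ kernelSubring (Matrix.transpose '' C) := by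
  rintro _ ⟨M, hM, rfl⟩ y
  refine eq_of_forall_trace_dotProduct_eq fun x => ?_
  calc _ = Tr ((g x ᵥ* M) ⬝ᵥ y) := by
        rw [dotProduct_comm, ← hg, vecMul_transpose, dotProduct_mulVec]
    _ = Tr ((x ᵥ* M) ⬝ᵥ f' y) := by rw [← hp M hM x, hf]
    _ = _ := by rw [← dotProduct_mulVec, ← vecMul_transpose, dotProduct_comm]

end TraceDuality

theorem IsMRDCode.exists_smul_of_mem_kernelSubring {F : Type*} [Field F] [Fintype F]
    {m n d : ℕ} {C : Set (Matrix (Fin m) (Fin n) F)} (hC : IsMRDCode C d)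
    (hcond : m.gcd n = 1 ∨ d < min m n) {p} (hp : p ∈ kernelSubring C) :
    ∃ a : F, (∀ x, p.1 x = a • x) ∧ ∀ y, p.2 y = a • y := by
  rcases le_or_gt m n with hmn | hnm
  · exact hC.exists_smul_of_mem_kernelSubring_of_le hmn (by rwa [min_eq_left hmn] at hcond) hp
  let := ZMod.algebra F (ringChar F)
  have : Fact (ringChar F).Prime := ⟨CharP.char_is_prime F _⟩
  obtain ⟨g', hg⟩ := exists_trace_dotProduct_adjoint p.1
  obtain ⟨f', hf⟩ := exists_trace_dotProduct_adjoint p.2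
  obtain ⟨a, hfa, hga⟩ := hC.transpose.exists_smul_of_mem_kernelSubring_of_le hnm.le
    (by rwa [min_eq_right hnm.le, Nat.gcd_comm] at hcond) (mem_kernelSubring_transpose hg hf hp)
  refine ⟨a, fun x => eq_of_forall_trace_dotProduct_eq fun y => ?_,
    fun y => eq_of_forall_trace_dotProduct_eq fun x => ?_⟩
  · rw [hg, hga, dotProduct_smul, smul_dotProduct]
  · rw [hf, hfa, dotProduct_smul, smul_dotProduct]

/-- Let `C` be an MRD code in `F_q^{m×n}` containing the zero matrix,
with `gcd(m,n) = 1` or minimum distance `d < min m n`. Then the kernel of the translation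
structure `T(C)` consists exactly of the scalar maps, i.e. it is isomorphic to `F_q`. -/
theorem mrd_kernel_eq_Fq {q m n d : ℕ} {F : Type*} [Field F] [Fintype F]
    (hq : Fintype.card F = q)
    (C : Set (Matrix (Fin m) (Fin n) F))
    (h0 : (0 : Matrix (Fin m) (Fin n) F) ∈ C)
    (hdist : ∀ A ∈ C, ∀ B ∈ C, A ≠ B → d ≤ (A - B).rank)
    (hattain : ∃ A ∈ C, ∃ B ∈ C, A ≠ B ∧ (A - B).rank = d)
    (hMRD : C.ncard = q ^ (max m n * (min m n - d + 1)))
    (hcond : Nat.gcd m n = 1 ∨ d < min m n) :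
    ∀ μ : ((Fin m → F) × (Fin n → F)) →+ ((Fin m → F) × (Fin n → F)),
      ((∀ y : Fin n → F, ∃ y', μ (0, y) = (0, y')) ∧
       (∀ M ∈ C, ∀ x : Fin m → F,
          ∃ x', μ (x, Matrix.vecMul x M) = (x', Matrix.vecMul x' M)))
      ↔ ∃ a : F, ∀ v : (Fin m → F) × (Fin n → F), μ v = a • v := by
  intro μ
  constructor
  · rintro ⟨hinf, hS⟩
    obtain ⟨p, hp, hμ⟩ := exists_mem_kernelSubring_of_stabilizes h0 hinf hS
    obtain ⟨a, hg, hf⟩ :=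
      (IsMRDCode.mk hdist hattain (hq ▸ hMRD)).exists_smul_of_mem_kernelSubring hcond hp
    exact ⟨a, fun v => by rw [hμ, hg, hf, Prod.smul_mk]⟩
  · rintro ⟨a, ha⟩
    exact ⟨fun y => ⟨a • y, by rw [ha, Prod.smul_mk, smul_zero]⟩,
      fun M _ x => ⟨a • x, by rw [ha, Prod.smul_mk, smul_vecMul]⟩⟩
end

section
/- Let C1 and C2 be K-linear rank metric codes in K^{m×n} that are equivalent, i.e., there exist A ∈ GL(m,K), B ∈ GL(n,K), and γ ∈ Aut(K) with C2 = {A M^γ B : M ∈ C1}. Then a matrix Z ∈ K^{m×m} belongs to the middle nucleus N_m(C1) if and only if A Z^γ A^{−1} belongs to N_m(C2); in particular N_m(C1) and N_m(C2) are isomorphic as rings. -/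
/-! The map `φ M = A * M^γ * B` is injective and intertwines left multiplication by `Z` with
left multiplication by `A * Z^γ * A⁻¹`, so `Z` maps `C1` into itself exactly when
`A * Z^γ * A⁻¹` maps `φ '' C1 = C2` into itself. -/

/-- The middle nucleus of a rank metric code `C ⊆ K^{m×n}`. -/
def middleNucleus {m n : ℕ} {K : Type*} [Field K]
    (C : Set (Matrix (Fin m) (Fin n) K)) : Set (Matrix (Fin m) (Fin m) K) :=
  {Z | ∀ M ∈ C, Z * M ∈ C}

open Function Set

theorem mem_middleNucleus_iff_mapsTo {m n : ℕ} {K : Type*} [Field K]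
    {C : Set (Matrix (Fin m) (Fin n) K)} {Z : Matrix (Fin m) (Fin m) K} :
    Z ∈ middleNucleus C ↔ MapsTo (Z * ·) C C :=
  Iff.rfl

theorem Function.Semiconj.mapsTo_image_iff {α β : Type*} {f : α → β} {fa : α → α} {fb : β → β}
    (h : Semiconj f fa fb) (hf : Injective f) {s t : Set α} :
    MapsTo fb (f '' s) (f '' t) ↔ MapsTo fa s t :=
  ⟨fun hb => by simpa only [preimage_image_eq _ hf] using h.mapsTo_preimage hb, h.mapsTo_image⟩

namespace Matrix

variable {m n : Type*} [Fintype m] [DecidableEq m] [Fintype n]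

theorem injective_mul_mul [DecidableEq n] {R : Type*} [CommRing R] {A : Matrix m m R}
    {B : Matrix n n R} (hA : IsUnit A) (hB : IsUnit B) :
    Injective (fun M : Matrix m n R => A * M * B) := by
  intro X Y h
  have hA' := (isUnit_iff_isUnit_det A).mp hA
  have hB' := (isUnit_iff_isUnit_det B).mp hB
  simpa only [Matrix.mul_assoc, nonsing_inv_mul_cancel_left _ _ hA',
    mul_nonsing_inv_cancel_right _ _ hB'] using congrArg (fun N => A⁻¹ * (N * B⁻¹)) h

theorem semiconj_mul_map_mul_conj {R S F : Type*} [NonUnitalNonAssocSemiring R] [CommRing S]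
    [FunLike F R S] [NonUnitalRingHomClass F R S] (γ : F) {A : Matrix m m S}
    (hA : IsUnit A) (B : Matrix n n S) (Z : Matrix m m R) :
    Semiconj (fun M : Matrix m n R => A * M.map γ * B) (Z * ·) (A * Z.map γ * A⁻¹ * ·) := by
  intro M
  simp only [Matrix.map_mul, Matrix.mul_assoc,
    nonsing_inv_mul_cancel_left _ _ ((isUnit_iff_isUnit_det A).mp hA)]

end Matrix

theorem middleNucleus_equiv_general {m n : ℕ} {K : Type*} [Field K]
    (C1 C2 : Set (Matrix (Fin m) (Fin n) K))
    (A : Matrix (Fin m) (Fin m) K) (B : Matrix (Fin n) (Fin n) K)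
    (hA : IsUnit A) (hB : IsUnit B) (γ : K ≃+* K)
    (hC2 : C2 = (fun M : Matrix (Fin m) (Fin n) K => A * M.map γ * B) '' C1) :
    ∀ Z : Matrix (Fin m) (Fin m) K,
      Z ∈ middleNucleus C1 ↔ A * Z.map γ * A⁻¹ ∈ middleNucleus C2 := by
  intro Z
  have hinj : Injective (fun M : Matrix (Fin m) (Fin n) K => A * M.map γ * B) :=
    (Matrix.injective_mul_mul hA hB).comp (Matrix.map_injective γ.injective)
  rw [mem_middleNucleus_iff_mapsTo, mem_middleNucleus_iff_mapsTo, hC2,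
    (Matrix.semiconj_mul_map_mul_conj γ hA B Z).mapsTo_image_iff hinj]

/-- If `C1`, `C2` are equivalent `K`-linear rank metric codes via
`C2 = {A M^γ B : M ∈ C1}` with `A, B` invertible and `γ ∈ Aut(K)`, then
`Z ∈ N_m(C1)` iff `A Z^γ A⁻¹ ∈ N_m(C2)`. -/
theorem middleNucleus_equiv {m n : ℕ} {K : Type*} [Field K]
    (C1 C2 : Set (Matrix (Fin m) (Fin n) K))
    (hadd1 : ∀ X ∈ C1, ∀ Y ∈ C1, X + Y ∈ C1)
    (hsmul1 : ∀ (c : K), ∀ X ∈ C1, c • X ∈ C1)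
    (hadd2 : ∀ X ∈ C2, ∀ Y ∈ C2, X + Y ∈ C2)
    (hsmul2 : ∀ (c : K), ∀ X ∈ C2, c • X ∈ C2)
    (A : Matrix (Fin m) (Fin m) K) (B : Matrix (Fin n) (Fin n) K)
    (hA : IsUnit A) (hB : IsUnit B) (γ : K ≃+* K)
    (hC2 : C2 = (fun M : Matrix (Fin m) (Fin n) K => A * M.map γ * B) '' C1) :
    ∀ Z : Matrix (Fin m) (Fin m) K,
      Z ∈ middleNucleus C1 ↔ A * Z.map γ * A⁻¹ ∈ middleNucleus C2 :=
  middleNucleus_equiv_general C1 C2 A B hA hB γ hC2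
end

section
/- Let C be a K-linear rank metric code in K^{m×n} and let C^⊥ = {N ∈ K^{m×n} : Tr(M N^t) = 0 for all M ∈ C} be its Delsarte dual. Then N_m(C^⊥) = {Z^t : Z ∈ N_m(C)} and N_r(C^⊥) = {Y^t : Y ∈ N_r(C)}. -/
open Matrix

/-- The right nucleus of a rank metric code `C ⊆ K^{m×n}`. -/
def rightNucleus {m n : ℕ} {K : Type*} [Field K]
    (C : Set (Matrix (Fin m) (Fin n) K)) : Set (Matrix (Fin n) (Fin n) K) :=
  {Y | ∀ M ∈ C, M * Y ∈ C}

/-- The Delsarte dual of a rank metric code, w.r.t. the form `⟨M,N⟩ = Tr(M Nᵗ)`. -/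
def delsarteDual {m n : ℕ} {K : Type*} [Field K]
    (C : Set (Matrix (Fin m) (Fin n) K)) : Set (Matrix (Fin m) (Fin n) K) :=
  {N | ∀ M ∈ C, Matrix.trace (M * Nᵀ) = 0}

/-!
Under the symmetric nondegenerate trace form `⟨M, N⟩ = tr (M Nᵀ)`, left multiplication by `Z`
has adjoint left multiplication by `Zᵀ`, and right multiplication by `Y` has adjoint right
multiplication by `Yᵀ`. An operator preserves a subspace `W` exactly when its adjoint preserves
`W^⊥`: one direction is immediate, the other uses `W^⊥⊥ = W`.
-/

namespace LinearMap.BilinForm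

theorem mapsTo_orthogonal {R M : Type*} [CommSemiring R] [AddCommMonoid M] [Module R M]
    {B : LinearMap.BilinForm R M} {f g : M → M} (hfg : ∀ x y, B (f x) y = B x (g y))
    {W : Submodule R M}
    (hW : Set.MapsTo f W W) : Set.MapsTo g (B.orthogonal W) (B.orthogonal W) :=
  fun y hy x hx => (hfg x y).symm.trans (hy (f x) (hW hx))

theorem mapsTo_orthogonal_iff {K V : Type*} [Field K] [AddCommGroup V] [Module K V]
    [FiniteDimensional K V] {B : LinearMap.BilinForm K V} (hB : B.Nondegenerate) (hB₀ : B.IsRefl)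
    {f g : V → V} (hfg : ∀ x y, B (f x) y = B x (g y)) (W : Submodule K V) :
    Set.MapsTo g (B.orthogonal W) (B.orthogonal W) ↔ Set.MapsTo f W W := by
  refine ⟨fun hW x hx => ?_, mapsTo_orthogonal hfg⟩
  rw [SetLike.mem_coe, ← orthogonal_orthogonal hB hB₀ W]
  exact fun y hy => hB₀ _ _ ((hfg x y).trans (hW hy x hx))

end LinearMap.BilinForm

namespace Matrix

variable {m n R : Type*} [Fintype m] [Fintype n] [CommSemiring R]

def traceMulTransposeForm : LinearMap.BilinForm R (Matrix m n R) :=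
  LinearMap.mk₂ R (fun M N => trace (M * Nᵀ))
    (fun M M' N => by simp only [Matrix.add_mul, trace_add])
    (fun c M N => by simp only [Matrix.smul_mul, trace_smul])
    (fun M N N' => by simp only [transpose_add, Matrix.mul_add, trace_add])
    (fun c M N => by simp only [transpose_smul, Matrix.mul_smul, trace_smul])

@[simp]
theorem traceMulTransposeForm_apply (M N : Matrix m n R) :
    traceMulTransposeForm M N = trace (M * Nᵀ) :=
  rfl

theorem traceMulTransposeForm_isSymm :
    (traceMulTransposeForm : LinearMap.BilinForm R (Matrix m n R)).IsSymm :=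
  ⟨fun M N => by
    rw [traceMulTransposeForm_apply, traceMulTransposeForm_apply, ← trace_transpose,
      transpose_mul, transpose_transpose]⟩

theorem traceMulTransposeForm_separatingLeft :
    (traceMulTransposeForm : LinearMap.BilinForm R (Matrix m n R)).SeparatingLeft :=
  fun M hM => ext_iff_trace_mul_right.mpr fun X => by simpa using hM Xᵀ

theorem traceMulTransposeForm_nondegenerate :
    (traceMulTransposeForm : LinearMap.BilinForm R (Matrix m n R)).Nondegenerate :=
  ⟨traceMulTransposeForm_separatingLeft, fun N hN =>
    traceMulTransposeForm_separatingLeft N fun M =>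
      (traceMulTransposeForm_isSymm.eq N M).trans (hN M)⟩

theorem traceMulTransposeForm_mul_left (Z : Matrix m m R) (M N : Matrix m n R) :
    traceMulTransposeForm (Z * M) N = traceMulTransposeForm M (Zᵀ * N) := by
  simp only [traceMulTransposeForm_apply, transpose_mul, transpose_transpose, Matrix.mul_assoc]
  rw [trace_mul_comm, Matrix.mul_assoc]

theorem traceMulTransposeForm_mul_right (Y : Matrix n n R) (M N : Matrix m n R) :
    traceMulTransposeForm (M * Y) N = traceMulTransposeForm M (N * Yᵀ) := by
  simp only [traceMulTransposeForm_apply, transpose_mul, transpose_transpose, Matrix.mul_assoc]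

end Matrix

section Nuclei

variable {m n : ℕ} {K : Type*} [Field K]

theorem delsarteDual_eq_orthogonal (C : Submodule K (Matrix (Fin m) (Fin n) K)) :
    delsarteDual (C : Set (Matrix (Fin m) (Fin n) K)) = traceMulTransposeForm.orthogonal C :=
  rfl

theorem mem_middleNucleus_delsarteDual_iff (C : Submodule K (Matrix (Fin m) (Fin n) K))
    (Z : Matrix (Fin m) (Fin m) K) :
    Z ∈ middleNucleus (delsarteDual (C : Set (Matrix (Fin m) (Fin n) K))) ↔
      Zᵀ ∈ middleNucleus (C : Set (Matrix (Fin m) (Fin n) K)) := by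
  rw [delsarteDual_eq_orthogonal]
  refine LinearMap.BilinForm.mapsTo_orthogonal_iff traceMulTransposeForm_nondegenerate
    traceMulTransposeForm_isSymm.isRefl (fun M N => ?_) C
  rw [traceMulTransposeForm_mul_left, transpose_transpose]

theorem mem_rightNucleus_delsarteDual_iff (C : Submodule K (Matrix (Fin m) (Fin n) K))
    (Y : Matrix (Fin n) (Fin n) K) :
    Y ∈ rightNucleus (delsarteDual (C : Set (Matrix (Fin m) (Fin n) K))) ↔
      Yᵀ ∈ rightNucleus (C : Set (Matrix (Fin m) (Fin n) K)) := by
  rw [delsarteDual_eq_orthogonal]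
  refine LinearMap.BilinForm.mapsTo_orthogonal_iff traceMulTransposeForm_nondegenerate
    traceMulTransposeForm_isSymm.isRefl (fun M N => ?_) C
  rw [traceMulTransposeForm_mul_right, transpose_transpose]

end Nuclei

/-- For a `K`-linear rank metric code `C ⊆ K^{m×n}` with Delsarte dual
`C^⊥`, one has `N_m(C^⊥) = N_m(C)^⊤` and `N_r(C^⊥) = N_r(C)^⊤`. -/
theorem nuclei_delsarte_dual {m n : ℕ} {K : Type*} [Field K]
    (C : Submodule K (Matrix (Fin m) (Fin n) K)) :
    middleNucleus (delsarteDual (C : Set (Matrix (Fin m) (Fin n) K)))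
        = (fun Z : Matrix (Fin m) (Fin m) K => Zᵀ) ''
            middleNucleus (C : Set (Matrix (Fin m) (Fin n) K)) ∧
    rightNucleus (delsarteDual (C : Set (Matrix (Fin m) (Fin n) K)))
        = (fun Y : Matrix (Fin n) (Fin n) K => Yᵀ) ''
            rightNucleus (C : Set (Matrix (Fin m) (Fin n) K)) := by
  rw [(transpose_involutive _ _).image_eq_preimage_symm,
    (transpose_involutive _ _).image_eq_preimage_symm]
  exact ⟨Set.ext (mem_middleNucleus_delsarteDual_iff C),
    Set.ext (mem_rightNucleus_delsarteDual_iff C)⟩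
end

section
/- Let C be a K-linear rank metric code in K^{m×n}, m ≤ n, with minimum distance d ≥ ⌊m/2⌋ + 1, containing at least one matrix of full rank m. If Z ∈ N_m(C) and there exists a nonzero C0 ∈ C with Z C0 = 0, then Z = 0. In particular, if K is a finite field, every nonzero element of N_m(C) is invertible and N_m(C) is a field. -/
/-!
If `Z ≠ 0` lies in the middle nucleus and `M` is a codeword of full rank `m`, then `Z * M` is a
nonzero codeword, so `d ≤ rank (Z * M) ≤ rank Z`. If moreover `Z * C₀ = 0` for a nonzero codeword
`C₀`, then `rank Z + rank C₀ ≤ m`, whence `2 * d ≤ m`, contradicting `d > m / 2`. So the middle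
nucleus is a subring without zero divisors; over a finite field it is a finite domain, hence by
Wedderburn a field, and its nonzero elements are invertible matrices.
-/

open Matrix

theorem Matrix.eq_zero_of_rank_eq_zero {R m n : Type*} [Field R] [Fintype n]
    {A : Matrix m n R} (h : A.rank = 0) : A = 0 := by
  classical
  have hA : A.mulVecLin = 0 := LinearMap.range_eq_bot.1 (Submodule.finrank_eq_zero.1 h)
  ext i j
  simpa using congrFun (LinearMap.congr_fun hA (Pi.single j 1)) i

theorem Matrix.eq_zero_of_mul_eq_zero_of_rank_eq_card {R l m n : Type*} [Field R] [Finite l]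
    [Fintype m] [Fintype n] {A : Matrix l m R} {B : Matrix m n R} (hB : B.rank = Fintype.card m)
    (hAB : A * B = 0) : A = 0 := by
  have := Fintype.ofFinite l
  have := rank_add_rank_le_card_of_mul_eq_zero hAB
  exact eq_zero_of_rank_eq_zero (by omega)

theorem Subring.isUnit_and_mul_comm_of_finite {R : Type*} [Ring R] (S : Subring R) [Finite S]
    (h : ∀ x ∈ S, ∀ y ∈ S, x * y = 0 → x = 0 ∨ y = 0) :
    (∀ x ∈ S, x ≠ 0 → IsUnit x) ∧ ∀ x ∈ S, ∀ y ∈ S, x * y = y * x := by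
  rcases subsingleton_or_nontrivial R with _ | _
  · exact ⟨fun x _ hx => absurd (Subsingleton.elim x 0) hx, fun _ _ _ _ => Subsingleton.elim _ _⟩
  have : NoZeroDivisors S :=
    ⟨fun {x y} hxy => (h x x.2 y y.2 (congrArg Subtype.val hxy)).imp Subtype.ext Subtype.ext⟩
  have : IsDomain S := NoZeroDivisors.to_isDomain S
  have hS : IsField S := Finite.isDomain_to_isField S
  refine ⟨fun x hx hx0 => ?_, fun x hx y hy => congrArg Subtype.val (hS.mul_comm ⟨x, hx⟩ ⟨y, hy⟩)⟩
  obtain ⟨y, hxy⟩ := hS.mul_inv_cancel (a := ⟨x, hx⟩) (fun h => hx0 (congrArg Subtype.val h))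
  have hyx : y * ⟨x, hx⟩ = 1 := hS.mul_comm y _ ▸ hxy
  exact ⟨⟨x, y, congrArg Subtype.val hxy, congrArg Subtype.val hyx⟩, rfl⟩

section RankMetricCode

variable {K : Type*} [Field K] {m n d : ℕ}

def middleNucleusSubring (C : Submodule K (Matrix (Fin m) (Fin n) K)) :
    Subring (Matrix (Fin m) (Fin m) K) where
  carrier := middleNucleus (C : Set (Matrix (Fin m) (Fin n) K))
  one_mem' M hM := by simpa using hM
  mul_mem' {Z W} hZ hW M hM := by simpa [Matrix.mul_assoc] using hZ _ (hW M hM)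
  zero_mem' M _ := by simp
  add_mem' {Z W} hZ hW M hM := by simpa [Matrix.add_mul] using C.add_mem (hZ M hM) (hW M hM)
  neg_mem' {Z} hZ M hM := by simpa [Matrix.neg_mul] using C.neg_mem (hZ M hM)

theorem mem_middleNucleusSubring {C : Submodule K (Matrix (Fin m) (Fin n) K)}
    {Z : Matrix (Fin m) (Fin m) K} :
    Z ∈ middleNucleusSubring C ↔ Z ∈ middleNucleus (C : Set (Matrix (Fin m) (Fin n) K)) :=
  Iff.rfl

theorem eq_zero_of_mem_middleNucleus_of_mul_eq_zero {C : Set (Matrix (Fin m) (Fin n) K)}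
    (hwt : ∀ A ∈ C, A ≠ 0 → d ≤ A.rank) (hd : m < 2 * d)
    {M : Matrix (Fin m) (Fin n) K} (hM : M ∈ C) (hMrank : M.rank = m)
    {Z : Matrix (Fin m) (Fin m) K} (hZ : Z ∈ middleNucleus C)
    {C₀ : Matrix (Fin m) (Fin n) K} (hC₀ : C₀ ∈ C) (hC₀ne : C₀ ≠ 0) (hZC₀ : Z * C₀ = 0) :
    Z = 0 := by
  by_contra hZne
  have hZM : Z * M ≠ 0 := fun h =>
    hZne (eq_zero_of_mul_eq_zero_of_rank_eq_card (by simpa using hMrank) h)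
  have h₁ : d ≤ Z.rank := (hwt _ (hZ M hM) hZM).trans (rank_mul_le_left Z M)
  have h₂ : d ≤ C₀.rank := hwt C₀ hC₀ hC₀ne
  have h₃ : Z.rank + C₀.rank ≤ m := by simpa using rank_add_rank_le_card_of_mul_eq_zero hZC₀
  omega

theorem eq_zero_or_eq_zero_of_mem_middleNucleus_of_mul_eq_zero
    {C : Set (Matrix (Fin m) (Fin n) K)}
    (hwt : ∀ A ∈ C, A ≠ 0 → d ≤ A.rank) (hd : m < 2 * d)
    {M : Matrix (Fin m) (Fin n) K} (hM : M ∈ C) (hMrank : M.rank = m)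
    {Z W : Matrix (Fin m) (Fin m) K} (hZ : Z ∈ middleNucleus C) (hW : W ∈ middleNucleus C)
    (hZW : Z * W = 0) : Z = 0 ∨ W = 0 := by
  refine or_iff_not_imp_right.2 fun hW0 => ?_
  have hWM : W * M ≠ 0 := fun h =>
    hW0 (eq_zero_of_mul_eq_zero_of_rank_eq_card (by simpa using hMrank) h)
  exact eq_zero_of_mem_middleNucleus_of_mul_eq_zero hwt hd hM hMrank hZ (hW M hM) hWM
    (by rw [← Matrix.mul_assoc, hZW, Matrix.zero_mul])

end RankMetricCode

theorem middleNucleus_field_general {m n d : ℕ} {K : Type*} [Field K]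
    (C : Set (Matrix (Fin m) (Fin n) K))
    (hadd : ∀ X ∈ C, ∀ Y ∈ C, X + Y ∈ C)
    (hsmul : ∀ (c : K), ∀ X ∈ C, c • X ∈ C)
    (hdist : ∀ A ∈ C, ∀ B ∈ C, A ≠ B → d ≤ (A - B).rank)
    (hd : m / 2 + 1 ≤ d)
    (hfull : ∃ M ∈ C, M.rank = m) :
    (∀ Z ∈ middleNucleus C, (∃ C0 ∈ C, C0 ≠ 0 ∧ Z * C0 = 0) → Z = 0) ∧
    (Finite K →
      (∀ Z ∈ middleNucleus C, Z ≠ 0 → IsUnit Z) ∧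
      (∀ Z ∈ middleNucleus C, ∀ W ∈ middleNucleus C, Z * W = W * Z)) := by
  obtain ⟨M, hM, hMrank⟩ := hfull
  have h0 : (0 : Matrix (Fin m) (Fin n) K) ∈ C := by simpa using hsmul 0 M hM
  let V : Submodule K (Matrix (Fin m) (Fin n) K) :=
    { carrier := C
      add_mem' := fun hX hY => hadd _ hX _ hY
      zero_mem' := h0
      smul_mem' := hsmul }
  have hwt : ∀ A ∈ C, A ≠ 0 → d ≤ A.rank := fun A hA hA0 => by
    simpa using hdist A hA 0 h0 hA0
  have hd' : m < 2 * d := by omega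
  refine ⟨fun Z hZ ⟨C₀, hC₀, hC₀ne, hZC₀⟩ =>
    eq_zero_of_mem_middleNucleus_of_mul_eq_zero hwt hd' hM hMrank hZ hC₀ hC₀ne hZC₀, fun _ => ?_⟩
  exact (middleNucleusSubring V).isUnit_and_mul_comm_of_finite fun Z hZ W hW =>
    eq_zero_or_eq_zero_of_mem_middleNucleus_of_mul_eq_zero hwt hd' hM hMrank
      (mem_middleNucleusSubring.1 hZ) (mem_middleNucleusSubring.1 hW)

/-- Let `C ⊆ K^{m×n}` (`m ≤ n`) be a `K`-linear rank metric code with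
minimum distance `d ≥ ⌊m/2⌋ + 1` containing a full-rank matrix. If `Z ∈ N_m(C)` kills a
nonzero `C0 ∈ C` then `Z = 0`. In particular if `K` is finite, every nonzero element of
`N_m(C)` is invertible and `N_m(C)` is a (finite, hence commutative) field. -/
theorem middleNucleus_field {m n d : ℕ} {K : Type*} [Field K]
    (C : Set (Matrix (Fin m) (Fin n) K))
    (hadd : ∀ X ∈ C, ∀ Y ∈ C, X + Y ∈ C)
    (hsmul : ∀ (c : K), ∀ X ∈ C, c • X ∈ C)
    (hmn : m ≤ n)
    (hdist : ∀ A ∈ C, ∀ B ∈ C, A ≠ B → d ≤ (A - B).rank)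
    (hattain : ∃ A ∈ C, ∃ B ∈ C, A ≠ B ∧ (A - B).rank = d)
    (hd : m / 2 + 1 ≤ d)
    (hfull : ∃ M ∈ C, M.rank = m) :
    (∀ Z ∈ middleNucleus C, (∃ C0 ∈ C, C0 ≠ 0 ∧ Z * C0 = 0) → Z = 0) ∧
    (Finite K →
      (∀ Z ∈ middleNucleus C, Z ≠ 0 → IsUnit Z) ∧
      (∀ Z ∈ middleNucleus C, ∀ W ∈ middleNucleus C, Z * W = W * Z)) :=
  middleNucleus_field_general C hadd hsmul hdist hd hfull
end

section
/- Let C be a linear MRD code in F_q^{m×n} with m ≤ n and minimum distance d > 1. Then the middle nucleus N_m(C) is a finite field. -/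
/-!
Let `Z ≠ 0` lie in the middle nucleus and suppose `Z` is singular, of rank `r` with
`0 < r < m`. Left multiplication by `Z` maps `C` onto a code whose columns lie in `im Z`, with
kernel a code whose columns lie in `ker Z`; the Singleton bound applied to both gives
`dim C ≤ n (r + 1 - d) + n (m - r + 1 - d) ≤ n (m - d)`, which is too small for an MRD code.
So every nonzero element of the (finite) middle nucleus is invertible, and by Wedderburn's
little theorem the middle nucleus is a field.
-/

open Matrix Module

theorem Submodule.exists_finrank_eq {K V : Type*} [DivisionRing K] [AddCommGroup V] [Module K V]
    [FiniteDimensional K V] {k : ℕ} (hk : k ≤ finrank K V) :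
    ∃ W : Submodule K V, finrank K W = k :=
  let b := Module.finBasis K V
  ⟨Submodule.span K (Set.range (b ∘ Fin.castLE hk)),
    (finrank_span_eq_card (b.linearIndependent.comp _ (Fin.castLE_injective hk))).trans
      (Fintype.card_fin k)⟩

theorem Subring.isField_of_forall_isUnit {R : Type*} [Ring R] [Nontrivial R] (S : Subring R)
    [Finite S] (hS : ∀ x ∈ S, x ≠ 0 → IsUnit x) : IsField S :=
  have : NoZeroDivisors S :=
    ⟨fun {a b} hab => or_iff_not_imp_left.mpr fun ha =>
      Subtype.ext ((hS a a.2 (by simpa using ha)).mul_right_eq_zero.mp (congrArg Subtype.val hab))⟩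
  have : IsDomain S := NoZeroDivisors.to_isDomain S
  Finite.isDomain_to_isField S

section

variable {F ι κ : Type*} [Field F] [Fintype ι] [Fintype κ]

namespace Matrix

theorem rank_le_finrank_of_mulVec_mem {M : Matrix ι κ F} {U : Submodule F (ι → F)}
    (hM : ∀ w, M *ᵥ w ∈ U) : M.rank ≤ finrank F U :=
  Submodule.finrank_mono (LinearMap.range_le_iff_comap.mpr (Submodule.eq_top_iff'.mpr hM))

/- Reducing the columns modulo a subspace `W ≤ U` of dimension `d - 1` is injective on `D`:
a matrix it kills has all its columns in `W`, hence rank `< d`. -/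
theorem finrank_le_singleton_bound {d : ℕ} (hd : 0 < d) (D : Submodule F (Matrix ι κ F))
    (U : Submodule F (ι → F)) (hcol : ∀ M ∈ D, ∀ w, M *ᵥ w ∈ U)
    (hrank : ∀ M ∈ D, M ≠ 0 → d ≤ M.rank) :
    finrank F D ≤ Fintype.card κ * (finrank F U + 1 - d) := by
  obtain ⟨W, hW⟩ := Submodule.exists_finrank_eq (min_le_right (d - 1) (finrank F U))
  let Φ : D →ₗ[F] (κ → F) →ₗ[F] U ⧸ W :=
    { toFun := fun M => W.mkQ ∘ₗ M.1.mulVecLin.codRestrict U (hcol M.1 M.2)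
      map_add' := fun M N => by
        ext w : 1
        simp only [LinearMap.add_apply, LinearMap.comp_apply, ← map_add]
        congr 1
        ext : 1
        exact add_mulVec _ _ _
      map_smul' := fun c M => by
        ext w : 1
        simp only [LinearMap.smul_apply, LinearMap.comp_apply, ← map_smul]
        congr 1
        ext : 1
        exact (smul_mulVec c _ w).trans (mulVec_smul _ c w).symm }
  have hΦ : Function.Injective Φ := by
    rw [← LinearMap.ker_eq_bot, LinearMap.ker_eq_bot']
    intro M hM
    by_contra hM0
    have hrk : (M : Matrix ι κ F).rank ≤ finrank F W := by
      rw [← Submodule.finrank_map_subtype_eq]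
      refine rank_le_finrank_of_mulVec_mem fun w =>
        ⟨M.1.mulVecLin.codRestrict U (hcol M.1 M.2) w, ?_, rfl⟩
      exact (Submodule.Quotient.mk_eq_zero W).mp (LinearMap.congr_fun hM w)
    have := hrank M M.2 (by simpa using hM0)
    omega
  calc finrank F D ≤ finrank F ((κ → F) →ₗ[F] U ⧸ W) :=
        LinearMap.finrank_le_finrank_of_injective hΦ
    _ = Fintype.card κ * (finrank F U - finrank F W) := by
        rw [finrank_linearMap, finrank_fintype_fun_eq_card, ← W.finrank_quotient_add_finrank,
          Nat.add_sub_cancel]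
    _ ≤ Fintype.card κ * (finrank F U + 1 - d) := Nat.mul_le_mul_left _ (by omega)

end Matrix

namespace Submodule

variable [DecidableEq ι]

def middleNucleus (C : Submodule F (Matrix ι κ F)) : Subring (Matrix ι ι F) where
  carrier := {Z | ∀ M ∈ C, Z * M ∈ C}
  zero_mem' M _ := by rw [Matrix.zero_mul]; exact C.zero_mem
  one_mem' M hM := by rw [Matrix.one_mul]; exact hM
  add_mem' hZ hW M hM := by rw [Matrix.add_mul]; exact C.add_mem (hZ M hM) (hW M hM)
  neg_mem' hZ M hM := by rw [Matrix.neg_mul]; exact C.neg_mem (hZ M hM)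
  mul_mem' hZ hW M hM := by rw [Matrix.mul_assoc]; exact hZ _ (hW M hM)

variable {C : Submodule F (Matrix ι κ F)} {d : ℕ}

theorem finrank_le_of_mem_middleNucleus (hd : 0 < d) (hrank : ∀ M ∈ C, M ≠ 0 → d ≤ M.rank)
    {Z : Matrix ι ι F} (hZ : Z ∈ C.middleNucleus) :
    finrank F C ≤ Fintype.card κ * (finrank F (LinearMap.range Z.mulVecLin) + 1 - d) +
      Fintype.card κ * (finrank F (LinearMap.ker Z.mulVecLin) + 1 - d) := by
  let ψ := (mulLeftLinearMap κ F Z).domRestrict C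
  have hrange := Matrix.finrank_le_singleton_bound hd (LinearMap.range ψ)
    (LinearMap.range Z.mulVecLin)
    (by rintro _ ⟨M, rfl⟩ w; exact ⟨M.1 *ᵥ w, Matrix.mulVec_mulVec w Z M.1⟩)
    (by rintro _ ⟨M, rfl⟩; exact hrank _ (hZ M M.2))
  have hker := Matrix.finrank_le_singleton_bound hd ((LinearMap.ker ψ).map C.subtype)
    (LinearMap.ker Z.mulVecLin)
    (by rintro _ ⟨M, hM, rfl⟩ w; simp_all [ψ, Matrix.mulVec_mulVec])
    (by rintro _ ⟨M, -, rfl⟩; exact hrank M M.2)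
  rw [finrank_map_subtype_eq] at hker
  rw [← ψ.finrank_range_add_finrank_ker]
  exact add_le_add hrange hker

theorem isUnit_of_mem_middleNucleus (hd : 2 ≤ d) (hrank : ∀ M ∈ C, M ≠ 0 → d ≤ M.rank)
    (hC : Fintype.card κ * (Fintype.card ι - d) < finrank F C)
    {Z : Matrix ι ι F} (hZ : Z ∈ C.middleNucleus) (hZ0 : Z ≠ 0) : IsUnit Z := by
  by_contra hunit
  have hr : 0 < finrank F (LinearMap.range Z.mulVecLin) :=
    Nat.pos_of_ne_zero fun h => hZ0 <| Matrix.toLin'.map_eq_zero_iff.mp <| by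
      rw [Matrix.toLin'_apply']
      exact LinearMap.range_eq_bot.mp (finrank_eq_zero.mp h)
  have hk : 0 < finrank F (LinearMap.ker Z.mulVecLin) :=
    Nat.pos_of_ne_zero fun h => hunit <| Matrix.mulVec_injective_iff_isUnit.mp <|
      LinearMap.ker_eq_bot.mp (finrank_eq_zero.mp h)
  have hsplit := finrank_le_of_mem_middleNucleus (by omega) hrank hZ
  have hrk := Z.mulVecLin.finrank_range_add_finrank_ker
  rw [finrank_fintype_fun_eq_card] at hrk
  rw [← Nat.mul_add] at hsplit
  have := Nat.mul_le_mul_left (Fintype.card κ)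
    (show finrank F (LinearMap.range Z.mulVecLin) + 1 - d +
      (finrank F (LinearMap.ker Z.mulVecLin) + 1 - d) ≤ Fintype.card ι - d by omega)
  omega

end Submodule

end

theorem mrd_middleNucleus_field_general {m n d : ℕ} {F : Type*} [Field F] [Fintype F]
    (C : Submodule F (Matrix (Fin m) (Fin n) F))
    (hmn : m ≤ n) (hd1 : 1 < d) (hdm : d ≤ m)
    (hdist : ∀ A ∈ C, ∀ B ∈ C, A ≠ B → d ≤ (A - B).rank)
    (hMRD : Nat.card C = Fintype.card F ^ (n * (m - d + 1))) :
    (∀ Z : Matrix (Fin m) (Fin m) F, (∀ M ∈ C, Z * M ∈ C) → Z ≠ 0 → IsUnit Z) ∧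
    (∀ Z W : Matrix (Fin m) (Fin m) F,
      (∀ M ∈ C, Z * M ∈ C) → (∀ M ∈ C, W * M ∈ C) → Z * W = W * Z) := by
  have hrank : ∀ M ∈ C, M ≠ 0 → d ≤ M.rank := fun M hM hM0 => by
    simpa using hdist M hM 0 C.zero_mem hM0
  have hfinrank : finrank F C = n * (m - d + 1) := by
    refine Nat.pow_right_injective (Fintype.one_lt_card (α := F)) ?_
    show Fintype.card F ^ finrank F C = Fintype.card F ^ (n * (m - d + 1))
    rw [← hMRD, Module.natCard_eq_pow_finrank (K := F), Nat.card_eq_fintype_card]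
  have hC : Fintype.card (Fin n) * (Fintype.card (Fin m) - d) < finrank F C := by
    rw [hfinrank, Fintype.card_fin, Fintype.card_fin]
    exact Nat.mul_lt_mul_of_pos_left (Nat.lt_succ_self _) (by omega)
  have hunit : ∀ Z ∈ C.middleNucleus, Z ≠ 0 → IsUnit Z := fun _ =>
    C.isUnit_of_mem_middleNucleus hd1 hrank hC
  have : NeZero m := ⟨by omega⟩
  refine ⟨hunit, fun Z W hZ hW => ?_⟩
  exact congrArg Subtype.val
    ((Subring.isField_of_forall_isUnit _ hunit).mul_comm ⟨Z, hZ⟩ ⟨W, hW⟩)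

/-- Let `C` be a linear MRD code in `F_q^{m×n}` (`m ≤ n`) with minimum
distance `d > 1`. Then the middle nucleus `N_m(C)` is a finite field: all its nonzero
elements are invertible and it is commutative. -/
theorem mrd_middleNucleus_field {m n d : ℕ} {F : Type*} [Field F] [Fintype F]
    (C : Submodule F (Matrix (Fin m) (Fin n) F))
    (hmn : m ≤ n) (hd1 : 1 < d) (hdm : d ≤ m)
    (hdist : ∀ A ∈ C, ∀ B ∈ C, A ≠ B → d ≤ (A - B).rank)
    (hattain : ∃ A ∈ C, ∃ B ∈ C, A ≠ B ∧ (A - B).rank = d)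
    (hMRD : Nat.card C = Fintype.card F ^ (n * (m - d + 1))) :
    (∀ Z : Matrix (Fin m) (Fin m) F, (∀ M ∈ C, Z * M ∈ C) → Z ≠ 0 → IsUnit Z) ∧
    (∀ Z W : Matrix (Fin m) (Fin m) F,
      (∀ M ∈ C, Z * M ∈ C) → (∀ M ∈ C, W * M ∈ C) → Z * W = W * Z) :=
  mrd_middleNucleus_field_general C hmn hd1 hdm hdist hMRD
end

section
/- Let H_{k,s}(η,h) = {a_0 x + a_1 x^{q^s} + ... + a_{k−1} x^{q^{s(k−1)}} + η a_0^{q^h} x^{q^{sk}} : a_i ∈ F_{q^n}} be a generalized twisted Gabidulin code with gcd(s,n) = 1, 2 ≤ k ≤ n−2, and η ∈ F_{q^n}* with N_{q^{sn}/q^s}(η) ≠ (−1)^{nk}. Then its middle nucleus (as a set of q-polynomials φ with f ∘ φ ∈ H for all f ∈ H) is isomorphic to F_{q^{gcd(n, sk−h)}}, and its right nucleus (φ with φ ∘ f ∈ H for all f) is isomorphic to F_{q^{gcd(n,h)}}. -/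
/-- The generalized twisted Gabidulin code `H_{k,s}(η,h)` as a set of `q`-polynomial maps
on `L = F_{q^n}`. -/
def twistedGabidulin {L : Type*} [Field L] (q n k s h : ℕ) [NeZero k] (η : L) : Set (L → L) :=
  {f | ∃ a : Fin k → L,
    f = fun x => (∑ i : Fin k, a i * x ^ q ^ (s * (i : ℕ)))
          + η * (a 0) ^ q ^ h * x ^ q ^ (s * k)}

/-- `φ` is an `F_q`-linear endomorphism of `L = F_{q^n}` (additive and commuting with
multiplication by elements of the fixed field of `x ↦ x^q`). -/
def IsQEnd {L : Type*} [Field L] (q : ℕ) (φ : L → L) : Prop :=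
  (∀ x y : L, φ (x + y) = φ x + φ y) ∧ (∀ c x : L, c ^ q = c → φ (c * x) = c * φ x)

/-!
Write a candidate nucleus element as a σ-polynomial `∑ b r * x ^ σ ^ r` with `σ = x ↦ x ^ q ^ s`
and `r ∈ ZMod n`. Since `gcd(s, n) = 1` these are `n` distinct Frobenius powers, linearly
independent over `L`, so coefficients can be compared; in these coordinates `H` consists of the
coefficient vectors supported on `{0, …, k}` with `b k = η * b 0 ^ q ^ h`.
Composing `φ` with the monomials `x ^ σ ^ j`, `1 ≤ j < k`, shows that `φ` is a σ-polynomial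
whose coefficients vanish outside `{-1, 0, 1}`. Composing with `a x + η a ^ q ^ h x ^ σ ^ k`
kills the coefficients at `±1` (for `n = 4`, `k = 2` this is where `N(η) ≠ 1` is needed) and
yields `d ^ σ ^ k = d ^ q ^ h` (middle) resp. `c ^ q ^ h = c` (right) for the remaining
coefficient. Finally, `x ↦ x ^ q` has order dividing `n`, so `d ^ q ^ a = d ^ q ^ b` iff `d` is
fixed by `x ↦ x ^ q ^ gcd(n, a - b)`.
-/

section

variable {L : Type*} [Field L] {q n : ℕ}

theorem pow_q_pow_pow_q_pow (x : L) (a b : ℕ) : (x ^ q ^ a) ^ q ^ b = x ^ q ^ (a + b) := by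
  rw [← pow_mul, ← pow_add]

theorem pow_q_pow_eq_iff_period_dvd {τ : RingAut L}
    (hτ : ∀ (m : ℕ) (x : L), (τ ^ m) x = x ^ q ^ m) (x : L) (a b : ℕ) :
    x ^ q ^ a = x ^ q ^ b ↔ (MulAction.period τ x : ℤ) ∣ (a - b : ℤ) := by
  rw [← MulAction.zpow_smul_eq_iff_period_dvd, sub_eq_neg_add, zpow_add, mul_smul, zpow_neg,
    zpow_natCast, zpow_natCast, inv_smul_eq_iff, RingAut.smul_def, RingAut.smul_def, hτ, hτ]

theorem pow_q_pow_eq_self_iff_period_dvd {τ : RingAut L}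
    (hτ : ∀ (m : ℕ) (x : L), (τ ^ m) x = x ^ q ^ m) (x : L) (a : ℕ) :
    x ^ q ^ a = x ↔ MulAction.period τ x ∣ a := by
  rw [← MulAction.pow_smul_eq_iff_period_dvd, RingAut.smul_def, hτ]

theorem pow_div_eq_prod_pow {M : Type*} [CommMonoid M] (x : M) {Q : ℕ} (hQ : 2 ≤ Q) (m : ℕ) :
    x ^ ((Q ^ m - 1) / (Q - 1)) = ∏ i ∈ Finset.range m, x ^ Q ^ i := by
  rw [← Nat.geomSum_eq hQ, Finset.prod_pow_eq_pow_sum]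

section FiniteField

variable [Fintype L]

theorem exists_ringAut_pow_apply (hq : ∃ e : ℕ, 0 < e ∧ q = ringChar L ^ e) :
    ∃ τ : RingAut L, ∀ (m : ℕ) (x : L), (τ ^ m) x = x ^ q ^ m := by
  obtain ⟨e, -, rfl⟩ := hq
  have := ringChar.charP L
  have : Fact (ringChar L).Prime := ⟨CharP.char_is_prime L _⟩
  refine ⟨iterateFrobeniusEquiv L (ringChar L) e, fun m x => ?_⟩
  induction m with
  | zero => simp
  | succ m ih =>
    rw [pow_succ', RingAut.mul_apply, ih, iterateFrobeniusEquiv_def, ← pow_mul, ← pow_succ]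

theorem add_pow_q_pow (hq : ∃ e : ℕ, 0 < e ∧ q = ringChar L ^ e) (m : ℕ) (x y : L) :
    (x + y) ^ q ^ m = x ^ q ^ m + y ^ q ^ m := by
  obtain ⟨τ, hτ⟩ := exists_ringAut_pow_apply hq
  simp only [← hτ, map_add]

theorem neg_pow_q_pow (hq : ∃ e : ℕ, 0 < e ∧ q = ringChar L ^ e) (m : ℕ) (x : L) :
    (-x) ^ q ^ m = -x ^ q ^ m := by
  obtain ⟨τ, hτ⟩ := exists_ringAut_pow_apply hq
  simp only [← hτ, map_neg]

theorem one_lt_of_card_eq_pow (hcard : Fintype.card L = q ^ n) : 1 < q := by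
  by_contra! hq
  have : Fintype.card L ≤ 1 := hcard ▸ pow_le_one₀ (Nat.zero_le q) hq
  exact absurd this (not_le.mpr Fintype.one_lt_card)

theorem pow_q_pow_eq_of_modEq (hcard : Fintype.card L = q ^ n) {a b : ℕ} (hab : a ≡ b [MOD n])
    (x : L) : x ^ q ^ a = x ^ q ^ b := by
  have hmod : ∀ c, x ^ q ^ c = x ^ q ^ (c % n) := fun c => by
    conv_lhs => rw [← Nat.mod_add_div c n, pow_add, pow_mul q n, ← hcard, pow_mul,
      FiniteField.pow_card_pow]
  rw [hmod a, hmod b, hab]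

theorem pow_q_pow_congr [NeZero n] (hcard : Fintype.card L = q ^ n) {a b : ℕ}
    (hab : (a : ZMod n) = b) (x : L) : x ^ q ^ a = x ^ q ^ b :=
  pow_q_pow_eq_of_modEq hcard ((ZMod.natCast_eq_natCast_iff a b n).mp hab) x

theorem pow_q_pow_eq_pow_q_pow_iff_gcd (hq : ∃ e : ℕ, 0 < e ∧ q = ringChar L ^ e)
    (hcard : Fintype.card L = q ^ n) (d : L) (a b : ℕ) :
    d ^ q ^ a = d ^ q ^ b ↔ d ^ q ^ Int.gcd n ((a : ℤ) - b) = d := by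
  obtain ⟨τ, hτ⟩ := exists_ringAut_pow_apply hq
  have hn : MulAction.period τ d ∣ n := by
    rw [← pow_q_pow_eq_self_iff_period_dvd hτ, ← hcard, FiniteField.pow_card]
  rw [pow_q_pow_eq_iff_period_dvd hτ, pow_q_pow_eq_self_iff_period_dvd hτ]
  exact ⟨fun h => Int.dvd_gcd (Int.natCast_dvd_natCast.mpr hn) h,
    fun h => (Int.natCast_dvd_natCast.mpr h).trans (Int.gcd_dvd_right _ _)⟩

open Polynomial in
theorem linearIndependent_pow_q_pow [NeZero n] (hcard : Fintype.card L = q ^ n) :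
    LinearIndependent L (fun t : ZMod n => fun x : L => x ^ q ^ t.val) := by
  have hq := one_lt_of_card_eq_pow hcard
  rw [Fintype.linearIndependent_iff]
  intro g hg
  set P : L[X] := ∑ t : ZMod n, C (g t) * X ^ q ^ t.val
  have hdeg : P.natDegree < Fintype.card L := by
    refine lt_of_le_of_lt (natDegree_sum_le_of_forall_le _ _ (n := q ^ (n - 1)) fun t _ => ?_) ?_
    · refine (natDegree_C_mul_X_pow_le _ _).trans (Nat.pow_le_pow_right hq.le ?_)
      have := t.val_lt
      omega
    · rw [hcard]
      exact Nat.pow_lt_pow_right hq (Nat.sub_lt (Nat.pos_of_neZero n) one_pos)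
  have hP : P = 0 := by
    refine eq_zero_of_natDegree_lt_card_of_eval_eq_zero P Function.injective_id (fun x => ?_) hdeg
    simpa [P, eval_finsetSum] using congrFun hg x
  intro t
  have hcoeff := congrArg (coeff · (q ^ t.val)) hP
  simp only [P, finsetSum_coeff, coeff_C_mul_X_pow, coeff_zero] at hcoeff
  rwa [Finset.sum_eq_single t (fun u _ hu => if_neg fun h => hu
    (ZMod.val_injective n (Nat.pow_right_injective hq h).symm)) (by simp), if_pos rfl] at hcoeff

theorem eq_zero_of_forall_mul_pow_add_mul_pow [NeZero n] (hcard : Fintype.card L = q ^ n)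
    {t t' : ℕ} (htt' : (t : ZMod n) ≠ t') {A D : L}
    (h : ∀ a : L, A * a ^ q ^ t + D * a ^ q ^ t' = 0) : A = 0 ∧ D = 0 := by
  refine (LinearIndepOn.pair_iff _ htt').mp ((linearIndependent_pow_q_pow hcard).linearIndepOn _)
    A D (funext fun a => ?_)
  simp only [Pi.add_apply, Pi.smul_apply, smul_eq_mul, Pi.zero_apply]
  rw [pow_q_pow_congr hcard (a := (t : ZMod n).val) (b := t) (by simp),
    pow_q_pow_congr hcard (a := (t' : ZMod n).val) (b := t') (by simp), h]

theorem pow_q_pow_mul_add_mul_mul_pred [NeZero n] (hcard : Fintype.card L = q ^ n) (x : L)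
    (s j : ℕ) : x ^ q ^ (s * j + s * (j * (n - 1))) = x := by
  have hn : s * j + s * (j * (n - 1)) = s * j * n := by
    obtain ⟨m, rfl⟩ : ∃ m, n = m + 1 := ⟨n - 1, by have := NeZero.pos n; omega⟩
    rw [Nat.add_sub_cancel]
    ring
  rw [pow_q_pow_congr hcard (b := 0) (by simp [hn]), pow_zero, pow_one]

end FiniteField

/-- Exponents are indexed by `ZMod n` since `σ = x ↦ x ^ q ^ s` satisfies `σ ^ n = id` on a
field with `q ^ n` elements. -/
def sigmaPoly (q s : ℕ) {n : ℕ} [NeZero n] {L : Type*} [Field L] (b : ZMod n → L) (x : L) : L :=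
  ∑ r : ZMod n, b r * x ^ q ^ (s * r.val)

section SigmaPoly

variable {s : ℕ} [NeZero n]

theorem sigmaPoly_mul_apply (b : ZMod n → L) (c x : L) :
    sigmaPoly q s b (c * x) = sigmaPoly q s (fun r => b r * c ^ q ^ (s * r.val)) x := by
  simp only [sigmaPoly, mul_pow, mul_assoc]

theorem sigmaPoly_add (b b' : ZMod n → L) (x : L) :
    sigmaPoly q s b x + sigmaPoly q s b' x = sigmaPoly q s (b + b') x := by
  simp only [sigmaPoly, Pi.add_apply, add_mul, Finset.sum_add_distrib]

theorem mul_sigmaPoly (c : L) (b : ZMod n → L) (x : L) :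
    c * sigmaPoly q s b x = sigmaPoly q s (c • b) x := by
  simp only [sigmaPoly, Finset.mul_sum, Pi.smul_apply, smul_eq_mul, mul_assoc]

theorem sigmaPoly_single (r : ZMod n) (c x : L) :
    sigmaPoly q s (Pi.single r c) x = c * x ^ q ^ (s * r.val) := by
  simp [sigmaPoly, Pi.single_apply]

variable [Fintype L]

theorem linearIndependent_pow_q_pow_mul (hcard : Fintype.card L = q ^ n) (hs : s.Coprime n) :
    LinearIndependent L (fun r : ZMod n => fun x : L => x ^ q ^ (s * r.val)) := by
  have hinj : Function.Injective fun r : ZMod n => (s : ZMod n) * r := by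
    intro r r' h
    simpa [ZMod.coe_unitOfCoprime] using (Units.mul_right_inj (ZMod.unitOfCoprime s hs)).mp h
  convert (linearIndependent_pow_q_pow hcard).comp _ hinj using 2 with r
  funext x
  exact pow_q_pow_congr hcard (by simp) x

theorem sigmaPoly_injective (hcard : Fintype.card L = q ^ n) (hs : s.Coprime n) :
    Function.Injective (sigmaPoly q s : (ZMod n → L) → L → L) := fun b b' h =>
  funext <| Fintype.linearIndependent_iffₛ.mp (linearIndependent_pow_q_pow_mul hcard hs) b b'
    (funext fun x => by simpa [sigmaPoly] using congrFun h x)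

theorem sigmaPoly_pow (hq : ∃ e : ℕ, 0 < e ∧ q = ringChar L ^ e)
    (hcard : Fintype.card L = q ^ n) (b : ZMod n → L) (j : ℕ) (x : L) :
    sigmaPoly q s b x ^ q ^ (s * j) = sigmaPoly q s (fun r : ZMod n => b (r - j) ^ q ^ (s * j)) x := by
  obtain ⟨τ, hτ⟩ := exists_ringAut_pow_apply hq
  rw [sigmaPoly, sigmaPoly, ← hτ, map_sum]
  refine Fintype.sum_equiv (Equiv.addRight (j : ZMod n)) _ _ fun r => ?_
  rw [map_mul, hτ, hτ, Equiv.coe_addRight, add_sub_cancel_right, pow_q_pow_pow_q_pow]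
  exact congrArg _ (pow_q_pow_congr hcard (by simp; ring) x)

theorem sigmaPoly_comp_pow (hcard : Fintype.card L = q ^ n) (b : ZMod n → L) (j : ℕ) (x : L) :
    sigmaPoly q s b (x ^ q ^ (s * j)) = sigmaPoly q s (fun r : ZMod n => b (r - j)) x := by
  rw [sigmaPoly, sigmaPoly]
  refine Fintype.sum_equiv (Equiv.addRight (j : ZMod n)) _ _ fun r => ?_
  rw [Equiv.coe_addRight, add_sub_cancel_right, pow_q_pow_pow_q_pow]
  exact congrArg _ (pow_q_pow_congr hcard (by simp; ring) x)

theorem sigmaPoly_add_apply (hq : ∃ e : ℕ, 0 < e ∧ q = ringChar L ^ e) (b : ZMod n → L)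
    (x y : L) : sigmaPoly q s b (x + y) = sigmaPoly q s b x + sigmaPoly q s b y := by
  simp only [sigmaPoly, add_pow_q_pow hq, mul_add, Finset.sum_add_distrib]

theorem exists_eq_sigmaPoly_of_pow_eq (hq : ∃ e : ℕ, 0 < e ∧ q = ringChar L ^ e)
    (hcard : Fintype.card L = q ^ n) {φ : L → L} {j : ℕ} {b₁ : ZMod n → L}
    (h : (fun x => φ x ^ q ^ (s * j)) = sigmaPoly q s b₁) :
    ∃ b : ZMod n → L, φ = sigmaPoly q s b :=
  ⟨fun r => b₁ (r - (j * (n - 1) : ℕ)) ^ q ^ (s * (j * (n - 1))), funext fun x => by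
    rw [← sigmaPoly_pow hq hcard _ (j * (n - 1)), ← congrFun h x, pow_q_pow_pow_q_pow,
      pow_q_pow_mul_add_mul_mul_pred hcard]⟩

theorem exists_eq_sigmaPoly_of_comp_pow (hcard : Fintype.card L = q ^ n) {φ : L → L} {j : ℕ}
    {b₁ : ZMod n → L} (h : (fun x => φ (x ^ q ^ (s * j))) = sigmaPoly q s b₁) :
    ∃ b : ZMod n → L, φ = sigmaPoly q s b :=
  ⟨fun r => b₁ (r - (j * (n - 1) : ℕ)), funext fun x => by
    rw [← sigmaPoly_comp_pow hcard _ (j * (n - 1)), ← congrFun h, pow_q_pow_pow_q_pow, add_comm,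
      pow_q_pow_mul_add_mul_mul_pred hcard]⟩

end SigmaPoly

def IsTwistedGabidulinCoeff (q k h : ℕ) {n : ℕ} {L : Type*} [Field L] (η : L)
    (b : ZMod n → L) : Prop :=
  (∀ r : ZMod n, k < r.val → b r = 0) ∧ b k = η * b 0 ^ q ^ h

section Code

variable {s k h : ℕ} {η : L}

theorem sigmaPoly_eq_of_support [NeZero n] {b : ZMod n → L} (hkn : k < n)
    (hb : ∀ r : ZMod n, k < r.val → b r = 0) (x : L) :
    sigmaPoly q s b x = ∑ i : Fin k, b i * x ^ q ^ (s * i) + b k * x ^ q ^ (s * k) := by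
  have hval : ∀ i ∈ Finset.range (k + 1), (i : ZMod n).val = i := fun i hi =>
    ZMod.val_cast_of_lt (by simp at hi; omega)
  rw [sigmaPoly, ← Finset.sum_subset (Finset.subset_univ ((Finset.range (k + 1)).image _)),
    Finset.sum_image, Finset.sum_congr rfl fun i hi => by rw [hval i hi], Finset.sum_range_succ,
    Fin.sum_univ_eq_sum_range (fun i => b i * x ^ q ^ (s * i))]
  · intro i hi j hj hij
    rw [← hval i hi, ← hval j hj, hij]
  · intro r _ hr
    rw [hb r ?_, zero_mul]
    contrapose! hr
    exact Finset.mem_image.mpr ⟨r.val, by simp; omega, ZMod.natCast_zmod_val r⟩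

variable [NeZero k]

theorem mem_twistedGabidulin_iff [NeZero n] (hkn : k < n) {f : L → L} :
    f ∈ twistedGabidulin q n k s h η ↔
      ∃ b : ZMod n → L, IsTwistedGabidulinCoeff q k h η b ∧ f = sigmaPoly q s b := by
  have hk : (k : ZMod n).val = k := ZMod.val_cast_of_lt hkn
  constructor
  · rintro ⟨a, rfl⟩
    let b : ZMod n → L := fun r =>
      if hr : r.val < k then a ⟨r.val, hr⟩ else if r.val = k then η * a 0 ^ q ^ h else 0
    have hb0 : b 0 = a 0 := by simp [b, Nat.pos_of_neZero k]
    have hsupp : ∀ r : ZMod n, k < r.val → b r = 0 := fun r hr => by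
      simp [b, hr.not_gt, hr.ne']
    refine ⟨b, ⟨hsupp, by simp [b, hk, hb0]⟩, funext fun x => ?_⟩
    rw [sigmaPoly_eq_of_support hkn hsupp]
    congr 1
    · refine Finset.sum_congr rfl fun i _ => ?_
      simp [b, ZMod.val_cast_of_lt (i.isLt.trans hkn)]
    · simp [b, hk]
  · rintro ⟨b, ⟨hsupp, htw⟩, rfl⟩
    refine ⟨fun i => b i, funext fun x => ?_⟩
    rw [sigmaPoly_eq_of_support hkn hsupp, htw]
    simp

theorem isTwistedGabidulinCoeff_of_sigmaPoly_mem [Fintype L] [NeZero n]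
    (hcard : Fintype.card L = q ^ n) (hs : s.Coprime n) (hkn : k < n) {b : ZMod n → L}
    (hb : sigmaPoly q s b ∈ twistedGabidulin q n k s h η) :
    IsTwistedGabidulinCoeff q k h η b := by
  obtain ⟨b', hb', hbb'⟩ := (mem_twistedGabidulin_iff hkn).mp hb
  rwa [sigmaPoly_injective hcard hs hbb']

theorem pow_mem_twistedGabidulin (hq0 : q ≠ 0) {j : ℕ} (hj : 1 ≤ j) (hjk : j < k) :
    (fun x : L => x ^ q ^ (s * j)) ∈ twistedGabidulin q n k s h η := by
  refine ⟨Pi.single ⟨j, hjk⟩ 1, funext fun x => ?_⟩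
  have h0 : (0 : Fin k) ≠ ⟨j, hjk⟩ := fun h => by simp [Fin.ext_iff] at h; omega
  simp [Pi.single_apply, h0, hq0]

theorem mul_add_mem_twistedGabidulin (a : L) :
    (fun x : L => a * x + η * a ^ q ^ h * x ^ q ^ (s * k)) ∈ twistedGabidulin q n k s h η := by
  refine ⟨Pi.single 0 a, funext fun x => ?_⟩
  simp [Pi.single_apply]

theorem comp_mul_mem_twistedGabidulin {d : L} (hd : d ^ q ^ (s * k) = d ^ q ^ h) {f : L → L}
    (hf : f ∈ twistedGabidulin q n k s h η) :
    (f ∘ fun x => d * x) ∈ twistedGabidulin q n k s h η := by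
  obtain ⟨a, rfl⟩ := hf
  refine ⟨fun i => a i * d ^ q ^ (s * i), funext fun x => ?_⟩
  simp only [Function.comp_apply, mul_pow, Fin.val_zero, mul_zero, pow_zero, pow_one, hd]
  congr 1
  · exact Finset.sum_congr rfl fun i _ => by ring
  · ring

theorem mul_comp_mem_twistedGabidulin {c : L} (hc : c ^ q ^ h = c) {f : L → L}
    (hf : f ∈ twistedGabidulin q n k s h η) :
    ((fun x => c * x) ∘ f) ∈ twistedGabidulin q n k s h η := by
  obtain ⟨a, rfl⟩ := hf
  refine ⟨fun i => c * a i, funext fun x => ?_⟩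
  simp only [Function.comp_apply, mul_pow, hc, mul_add, Finset.mul_sum]
  congr 1
  · exact Finset.sum_congr rfl fun i _ => by ring
  · ring

end Code

section Support

variable {M : Type*} [Zero M] {k : ℕ} {b : ZMod n → M}

theorem apply_natCast_eq_zero_of_shifts
    (hb : ∀ j : ℕ, 1 ≤ j → j < k → ∀ r : ZMod n, k < r.val → b (r - j) = 0)
    (hk : 2 ≤ k) (hkn : k + 2 ≤ n) {m : ℕ} (hm : 2 ≤ m) (hmn : m + 2 ≤ n) : b m = 0 := by
  have hj := hb (min (k - 1) (n - 1 - m)) (by omega) (by omega)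
    ((m + min (k - 1) (n - 1 - m) : ℕ) : ZMod n) (by rw [ZMod.val_cast_of_lt (by omega)]; omega)
  simpa using hj

theorem apply_neg_natCast_eq_zero (hzero : ∀ m : ℕ, 2 ≤ m → m + 2 ≤ n → b m = 0) {m : ℕ}
    (hm : 2 ≤ m) (hmn : m + 2 ≤ n) : b (-m) = 0 := by
  rw [← zero_sub, ← ZMod.natCast_self, ← Nat.cast_sub (by omega)]
  exact hzero _ (by omega) (by omega)

theorem apply_neg_one_eq_zero_and_apply_one_eq_zero
    (hzero : ∀ m : ℕ, 2 ≤ m → m + 2 ≤ n → b m = 0) (hk : 2 ≤ k) (hkn : k + 2 ≤ n)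
    (hk4 : ¬(k = 2 ∧ n = 4)) (htw : b (k - 1) = 0 ↔ b (-1) = 0)
    (hslot : b (k + 1) = 0 ↔ b 1 = 0) : b (-1) = 0 ∧ b 1 = 0 := by
  have hpred : ((k : ZMod n) - 1) = ((k - 1 : ℕ) : ZMod n) := by
    rw [Nat.cast_sub (by omega), Nat.cast_one]
  rcases (by omega : k + 3 ≤ n ∨ (k + 2 = n ∧ 3 ≤ k)) with hkn' | ⟨hkn', hk3⟩
  · have hC : b 1 = 0 := hslot.mp (by exact_mod_cast hzero (k + 1) (by omega) (by omega))
    refine ⟨htw.mp ?_, hC⟩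
    rcases (by omega : k = 2 ∨ 3 ≤ k) with rfl | hk3
    · simpa [show (2 : ZMod n) - 1 = 1 by ring] using hC
    · rw [hpred]
      exact hzero (k - 1) (by omega) (by omega)
  · have hA : b (-1) = 0 := htw.mp (by rw [hpred]; exact hzero (k - 1) (by omega) (by omega))
    have hsucc : (k : ZMod n) + 1 = -1 := by
      rw [eq_neg_iff_add_eq_zero, add_assoc, ← Nat.cast_one, ← Nat.cast_add, ← Nat.cast_add, hkn',
        ZMod.natCast_self]
    exact ⟨hA, hslot.mp (hsucc ▸ hA)⟩

theorem eq_single_zero_of_apply_eq_zero [NeZero n] (hzero : ∀ m : ℕ, 2 ≤ m → m + 2 ≤ n → b m = 0)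
    (hA : b (-1) = 0) (hC : b 1 = 0) : b = Pi.single 0 (b 0) := by
  funext r
  rcases eq_or_ne r 0 with rfl | hr
  · simp
  rw [Pi.single_eq_of_ne hr, ← ZMod.natCast_zmod_val r]
  have hr0 : r.val ≠ 0 := (ZMod.val_ne_zero r).mpr hr
  have hrn := r.val_lt
  rcases (by omega : r.val = 1 ∨ r.val = n - 1 ∨ (2 ≤ r.val ∧ r.val + 2 ≤ n)) with h1 | h1 | h1
  · simpa [h1] using hC
  · rwa [h1, Nat.cast_sub (by omega), ZMod.natCast_self, Nat.cast_one, zero_sub]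
  · exact hzero _ h1.1 h1.2

end Support

section FourDim

variable {s : ℕ} {η : L}

theorem prod_pow_four_ne_one_of_norm {k : ℕ} (hq : 1 < q) (hs : s ≠ 0)
    (hnorm : η ^ ((q ^ (s * 4) - 1) / (q ^ s - 1)) ≠ (-1 : L) ^ (4 * k)) :
    η * η ^ q ^ (s * 1) * η ^ q ^ (s * 2) * η ^ q ^ (s * 3) ≠ 1 := by
  rw [pow_mul, pow_div_eq_prod_pow η (Nat.one_lt_pow hs hq)] at hnorm
  rw [pow_mul, show (-1 : L) ^ 4 = 1 by norm_num, one_pow] at hnorm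
  simpa [Finset.prod_range_succ, ← pow_mul] using hnorm

variable [Fintype L]

theorem eq_zero_of_eq_neg_mul_pow (hq : ∃ e : ℕ, 0 < e ∧ q = ringChar L ^ e)
    (hcard : Fintype.card L = q ^ 4)
    (hN : η * η ^ q ^ (s * 1) * η ^ q ^ (s * 2) * η ^ q ^ (s * 3) ≠ 1) {C : L}
    (hC : C = -(η * η ^ q ^ (s * 3) * C ^ q ^ (s * 2))) : C = 0 := by
  -- applying `σ ^ 2` to `hC` and substituting back gives `C = N(η) * C`
  have hC2 : C ^ q ^ (s * 2) = -(η ^ q ^ (s * 2) * η ^ q ^ (s * 1) * C) := by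
    conv_lhs => rw [hC]
    rw [neg_pow_q_pow hq, mul_pow, mul_pow, pow_q_pow_pow_q_pow, pow_q_pow_pow_q_pow,
      pow_q_pow_eq_of_modEq hcard (a := s * 3 + s * 2) (b := s * 1) (by simp [Nat.ModEq]; omega),
      pow_q_pow_eq_of_modEq hcard (a := s * 2 + s * 2) (b := 0) (by simp [Nat.ModEq]; omega),
      pow_zero, pow_one]
  have hNC : (η * η ^ q ^ (s * 1) * η ^ q ^ (s * 2) * η ^ q ^ (s * 3) - 1) * C = 0 := by
    linear_combination (-1 : L) * hC + η * η ^ q ^ (s * 3) * hC2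
  exact (mul_eq_zero.mp hNC).resolve_left (sub_ne_zero.mpr hN)

theorem eq_zero_of_relations_four_middle (hq : ∃ e : ℕ, 0 < e ∧ q = ringChar L ^ e)
    (hcard : Fintype.card L = q ^ 4) {h : ℕ}
    (hN : η * η ^ q ^ (s * 1) * η ^ q ^ (s * 2) * η ^ q ^ (s * 3) ≠ 1) {A C : L}
    (htw : C ^ q ^ (s * 1) = η * (A ^ q ^ (s * 1)) ^ q ^ h)
    (hslot : ∀ a : L, a * A + η * a ^ q ^ h * C ^ q ^ (s * 2) = 0) : A = 0 ∧ C = 0 := by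
  have hq0 : q ≠ 0 := (one_lt_of_card_eq_pow hcard).ne_bot
  by_cases hh : ((h : ℕ) : ZMod 4) = 0
  · have hfix : ∀ x : L, x ^ q ^ h = x := fun x => by
      rw [pow_q_pow_congr hcard (b := 0) (by simpa using hh), pow_zero, pow_one]
    have hA : A = -(η * C ^ q ^ (s * 2)) := by
      linear_combination (by simpa [hfix] using hslot 1 : A + η * C ^ q ^ (s * 2) = 0)
    have h3 := congrArg (· ^ q ^ (s * 3)) htw
    simp only [hfix, mul_pow, pow_q_pow_pow_q_pow] at h3
    rw [pow_q_pow_eq_of_modEq hcard (a := s * 1 + s * 3) (b := 0) (by simp [Nat.ModEq]; omega),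
      pow_q_pow_eq_of_modEq hcard (a := s * 1 + s * 3) (b := 0) (by simp [Nat.ModEq]; omega),
      pow_zero, pow_one, pow_one] at h3
    have hC := eq_zero_of_eq_neg_mul_pow hq hcard hN (h3.trans (by rw [hA]; ring))
    simp [hA, hC, hq0]
  · obtain ⟨hA, hC⟩ := eq_zero_of_forall_mul_pow_add_mul_pow hcard (t := 0) (t' := h)
      (by simpa using Ne.symm hh) (A := A) (D := η * C ^ q ^ (s * 2))
      (fun a => by linear_combination hslot a)
    refine ⟨hA, pow_eq_zero_iff (pow_ne_zero (s * 1) hq0) |>.mp ?_⟩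
    rw [htw, hA]
    simp [hq0]

theorem eq_zero_of_relations_four_right (hq : ∃ e : ℕ, 0 < e ∧ q = ringChar L ^ e)
    (hcard : Fintype.card L = q ^ 4) {h : ℕ}
    (hN : η * η ^ q ^ (s * 1) * η ^ q ^ (s * 2) * η ^ q ^ (s * 3) ≠ 1) {A C : L}
    (htw : C = η * A ^ q ^ h)
    (hslot : ∀ a : L, A * a ^ q ^ (s * 3) + C * (η * a ^ q ^ h) ^ q ^ (s * 1) = 0) :
    A = 0 ∧ C = 0 := by
  have hq0 : q ≠ 0 := (one_lt_of_card_eq_pow hcard).ne_bot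
  have hslot' : ∀ a : L, A * a ^ q ^ (s * 3) + C * η ^ q ^ (s * 1) * a ^ q ^ (h + s * 1) = 0 :=
    fun a => by rw [← hslot a, mul_pow, pow_q_pow_pow_q_pow]; ring
  by_cases hh : ((s * 3 : ℕ) : ZMod 4) = ((h + s * 1 : ℕ) : ZMod 4)
  · have hA : A = -(C * η ^ q ^ (s * 1)) := by
      linear_combination (by simpa using hslot' 1 : A + C * η ^ q ^ (s * 1) = 0)
    have hh2 : A ^ q ^ h = A ^ q ^ (s * 2) :=
      pow_q_pow_congr hcard (by push_cast at hh ⊢; linear_combination -hh) A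
    have hC := eq_zero_of_eq_neg_mul_pow hq hcard hN (C := C) (by
      calc C = η * A ^ q ^ (s * 2) := by rw [htw, hh2]
        _ = _ := by
          rw [hA, neg_pow_q_pow hq, mul_pow, pow_q_pow_pow_q_pow,
            pow_q_pow_eq_of_modEq hcard (a := s * 1 + s * 2) (b := s * 3)
              (by simp [Nat.ModEq]; omega)]
          ring)
    simp [hA, hC]
  · obtain ⟨hA, -⟩ := eq_zero_of_forall_mul_pow_add_mul_pow hcard hh hslot'
    refine ⟨hA, ?_⟩
    rw [htw, hA]
    simp [hq0]

end FourDim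

section Nuclei

variable [Fintype L] [NeZero n] {s k h : ℕ} {η : L}

theorem eq_single_of_relations_middle (hq : ∃ e : ℕ, 0 < e ∧ q = ringChar L ^ e)
    (hcard : Fintype.card L = q ^ n) (hs : s ≠ 0) (hk : 2 ≤ k) (hkn : k + 2 ≤ n) (hη : η ≠ 0)
    (hnorm : η ^ ((q ^ (s * n) - 1) / (q ^ s - 1)) ≠ (-1 : L) ^ (n * k)) {b : ZMod n → L}
    (hshift : ∀ j, 1 ≤ j → j < k →
      IsTwistedGabidulinCoeff q k h η fun r : ZMod n => b (r - j) ^ q ^ (s * j))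
    (hG : ∀ a : L, IsTwistedGabidulinCoeff q k h η
      (a • b + (η * a ^ q ^ h) • fun r => b (r - k) ^ q ^ (s * k))) :
    b = Pi.single 0 (b 0) ∧ b 0 ^ q ^ (s * k) = b 0 ^ q ^ h := by
  have hq0 : q ≠ 0 := (one_lt_of_card_eq_pow hcard).ne_bot
  have hzero : ∀ m : ℕ, 2 ≤ m → m + 2 ≤ n → b m = 0 := fun m hm hmn =>
    apply_natCast_eq_zero_of_shifts (fun j hj hjk r hr =>
      pow_eq_zero_iff (pow_ne_zero _ hq0) |>.mp ((hshift j hj hjk).1 r hr)) hk hkn hm hmn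
  have htw := (hshift 1 le_rfl (by omega)).2
  have hslot : ∀ a : L, a * b (k + 1) + η * a ^ q ^ h * b 1 ^ q ^ (s * k) = 0 := fun a => by
    simpa using (hG a).1 (k + 1) (by rw [← Nat.cast_add_one, ZMod.val_cast_of_lt (by omega)]; omega)
  simp only [Nat.cast_one, zero_sub] at htw
  have hAC : b (-1) = 0 ∧ b 1 = 0 := by
    by_cases hk4 : k = 2 ∧ n = 4
    · obtain ⟨rfl, rfl⟩ := hk4
      exact eq_zero_of_relations_four_middle hq hcard
        (prod_pow_four_ne_one_of_norm (one_lt_of_card_eq_pow hcard) hs hnorm)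
        (by simpa [show (2 : ZMod 4) - 1 = 1 by decide] using htw)
        (fun a => by simpa [show (2 : ZMod 4) + 1 = -1 by decide] using hslot a)
    · refine apply_neg_one_eq_zero_and_apply_one_eq_zero hzero hk hkn hk4 ?_ ?_
      · rw [← pow_eq_zero_iff (pow_ne_zero _ hq0), htw]
        simp [hη, hq0]
      · have h1 : b (k + 1) + η * b 1 ^ q ^ (s * k) = 0 := by simpa using hslot 1
        rw [eq_neg_of_add_eq_zero_left h1]
        simp [hη, hq0]
  refine ⟨eq_single_zero_of_apply_eq_zero hzero hAC.1 hAC.2, ?_⟩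
  simpa [hzero k hk (by omega), apply_neg_natCast_eq_zero hzero hk (by omega), hq0, hη]
    using (hG 1).2

theorem eq_single_of_relations_right (hq : ∃ e : ℕ, 0 < e ∧ q = ringChar L ^ e)
    (hcard : Fintype.card L = q ^ n) (hs : s ≠ 0) (hk : 2 ≤ k) (hkn : k + 2 ≤ n) (hη : η ≠ 0)
    (hnorm : η ^ ((q ^ (s * n) - 1) / (q ^ s - 1)) ≠ (-1 : L) ^ (n * k)) {b : ZMod n → L}
    (hshift : ∀ j, 1 ≤ j → j < k → IsTwistedGabidulinCoeff q k h η fun r : ZMod n => b (r - j))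
    (hG : ∀ a : L, IsTwistedGabidulinCoeff q k h η
      ((fun r => b r * a ^ q ^ (s * r.val)) +
        fun r => b (r - k) * (η * a ^ q ^ h) ^ q ^ (s * (r - k).val))) :
    b = Pi.single 0 (b 0) ∧ b 0 ^ q ^ h = b 0 := by
  have hq0 : q ≠ 0 := (one_lt_of_card_eq_pow hcard).ne_bot
  have hzero : ∀ m : ℕ, 2 ≤ m → m + 2 ≤ n → b m = 0 := fun m hm hmn =>
    apply_natCast_eq_zero_of_shifts (fun j hj hjk r hr => (hshift j hj hjk).1 r hr) hk hkn hm hmn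
  have hk1 : ((k : ZMod n) + 1).val = k + 1 := by
    rw [← Nat.cast_add_one, ZMod.val_cast_of_lt (by omega)]
  have hv1 : (1 : ZMod n).val = 1 := by
    simpa using ZMod.val_cast_of_lt (n := n) (a := 1) (by omega)
  have htw := (hshift 1 le_rfl (by omega)).2
  have hslot := fun a => (hG a).1 (k + 1) (by omega)
  simp only [Pi.add_apply, hk1, hv1, add_sub_cancel_left, Nat.cast_one, zero_sub] at htw hslot
  have hAC : b (-1) = 0 ∧ b 1 = 0 := by
    by_cases hk4 : k = 2 ∧ n = 4
    · obtain ⟨rfl, rfl⟩ := hk4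
      exact eq_zero_of_relations_four_right hq hcard
        (prod_pow_four_ne_one_of_norm (one_lt_of_card_eq_pow hcard) hs hnorm)
        (by simpa [show (2 : ZMod 4) - 1 = 1 by decide] using htw)
        (fun a => by simpa [show (2 : ZMod 4) + 1 = -1 by decide] using hslot a)
    · refine apply_neg_one_eq_zero_and_apply_one_eq_zero hzero hk hkn hk4 ?_ ?_
      · rw [htw]
        simp [hη, hq0]
      · have h1 : b (k + 1) + b 1 * η ^ q ^ s = 0 := by simpa using hslot 1
        rw [eq_neg_of_add_eq_zero_left h1]
        simp [hη, hq0]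
  refine ⟨eq_single_zero_of_apply_eq_zero hzero hAC.1 hAC.2, ?_⟩
  have hB : b 0 * η = η * b 0 ^ q ^ h := by
    simpa [hzero k hk (by omega), apply_neg_natCast_eq_zero hzero hk (by omega)] using (hG 1).2
  exact mul_left_cancel₀ hη (hB.symm.trans (mul_comm _ _))

variable [NeZero k]

theorem exists_eq_mul_of_forall_comp_mem_middle (hq : ∃ e : ℕ, 0 < e ∧ q = ringChar L ^ e)
    (hcard : Fintype.card L = q ^ n) (hs : s.Coprime n) (hk : 2 ≤ k) (hkn : k + 2 ≤ n)
    (hη : η ≠ 0) (hnorm : η ^ ((q ^ (s * n) - 1) / (q ^ s - 1)) ≠ (-1 : L) ^ (n * k))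
    {φ : L → L}
    (hφ : ∀ f ∈ twistedGabidulin q n k s h η, f ∘ φ ∈ twistedGabidulin q n k s h η) :
    ∃ d : L, d ^ q ^ (s * k) = d ^ q ^ h ∧ φ = fun x => d * x := by
  have hq0 : q ≠ 0 := (one_lt_of_card_eq_pow hcard).ne_bot
  have hk' : k < n := by omega
  have hs0 : s ≠ 0 := by rintro rfl; simp at hs; omega
  obtain ⟨b, rfl⟩ : ∃ b : ZMod n → L, φ = sigmaPoly q s b := by
    obtain ⟨b₁, -, hb₁⟩ := (mem_twistedGabidulin_iff hk').mp
      (hφ _ (pow_mem_twistedGabidulin hq0 le_rfl (by omega : 1 < k)))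
    exact exists_eq_sigmaPoly_of_pow_eq hq hcard hb₁
  obtain ⟨hb, hd⟩ := eq_single_of_relations_middle hq hcard hs0 hk hkn hη hnorm
    (fun j hj hjk => isTwistedGabidulinCoeff_of_sigmaPoly_mem hcard hs hk' <| by
      convert hφ _ (pow_mem_twistedGabidulin hq0 hj hjk) using 1
      exact funext fun x => (sigmaPoly_pow hq hcard b j x).symm)
    (fun a => isTwistedGabidulinCoeff_of_sigmaPoly_mem hcard hs hk' <| by
      convert hφ _ (mul_add_mem_twistedGabidulin a) using 1
      funext x
      rw [Function.comp_apply, sigmaPoly_pow hq hcard, mul_sigmaPoly, mul_sigmaPoly,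
        sigmaPoly_add])
  refine ⟨b 0, hd, ?_⟩
  rw [hb]
  funext x
  simp [sigmaPoly_single]

theorem exists_eq_mul_of_forall_comp_mem_right (hq : ∃ e : ℕ, 0 < e ∧ q = ringChar L ^ e)
    (hcard : Fintype.card L = q ^ n) (hs : s.Coprime n) (hk : 2 ≤ k) (hkn : k + 2 ≤ n)
    (hη : η ≠ 0) (hnorm : η ^ ((q ^ (s * n) - 1) / (q ^ s - 1)) ≠ (-1 : L) ^ (n * k))
    {φ : L → L}
    (hφ : ∀ f ∈ twistedGabidulin q n k s h η, φ ∘ f ∈ twistedGabidulin q n k s h η) :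
    ∃ c : L, c ^ q ^ h = c ∧ φ = fun x => c * x := by
  have hq0 : q ≠ 0 := (one_lt_of_card_eq_pow hcard).ne_bot
  have hk' : k < n := by omega
  have hs0 : s ≠ 0 := by rintro rfl; simp at hs; omega
  obtain ⟨b, rfl⟩ : ∃ b : ZMod n → L, φ = sigmaPoly q s b := by
    obtain ⟨b₁, -, hb₁⟩ := (mem_twistedGabidulin_iff hk').mp
      (hφ _ (pow_mem_twistedGabidulin hq0 le_rfl (by omega : 1 < k)))
    exact exists_eq_sigmaPoly_of_comp_pow hcard hb₁
  obtain ⟨hb, hc⟩ := eq_single_of_relations_right hq hcard hs0 hk hkn hη hnorm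
    (fun j hj hjk => isTwistedGabidulinCoeff_of_sigmaPoly_mem hcard hs hk' <| by
      convert hφ _ (pow_mem_twistedGabidulin hq0 hj hjk) using 1
      exact funext fun x => (sigmaPoly_comp_pow hcard b j x).symm)
    (fun a => isTwistedGabidulinCoeff_of_sigmaPoly_mem hcard hs hk' <| by
      convert hφ _ (mul_add_mem_twistedGabidulin a) using 1
      funext x
      rw [Function.comp_apply, sigmaPoly_add_apply hq, sigmaPoly_mul_apply, sigmaPoly_mul_apply,
        sigmaPoly_comp_pow hcard, sigmaPoly_add])
  refine ⟨b 0, hc, ?_⟩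
  rw [hb]
  funext x
  simp [sigmaPoly_single]

end Nuclei

end

/-- For a generalized twisted Gabidulin code `H_{k,s}(η,h)` with
`gcd(s,n)=1`, `2 ≤ k ≤ n−2`, `η ≠ 0` and `N_{q^{sn}/q^s}(η) ≠ (−1)^{nk}`, the middle
nucleus is the field `F_{q^{gcd(n, sk−h)}}` (acting by `x ↦ dx`) and the right nucleus is
`F_{q^{gcd(n,h)}}`. -/
theorem twistedGabidulin_nuclei {q n k s h : ℕ} [NeZero k] {L : Type*} [Field L] [Fintype L]
    (hq : ∃ e : ℕ, 0 < e ∧ q = ringChar L ^ e)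
    (hcard : Fintype.card L = q ^ n)
    (hs : Nat.gcd s n = 1) (hk2 : 2 ≤ k) (hkn : k ≤ n - 2)
    (η : L) (hη : η ≠ 0)
    (hnorm : η ^ ((q ^ (s * n) - 1) / (q ^ s - 1)) ≠ (-1 : L) ^ (n * k)) :
    ({φ : L → L | IsQEnd q φ ∧
        ∀ f ∈ twistedGabidulin (L := L) q n k s h η,
          f ∘ φ ∈ twistedGabidulin (L := L) q n k s h η}
      = {φ : L → L | ∃ d : L,
          d ^ q ^ (Int.gcd (n : ℤ) ((s : ℤ) * (k : ℤ) - (h : ℤ))) = d ∧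
          φ = fun x => d * x}) ∧
    ({φ : L → L | IsQEnd q φ ∧
        ∀ f ∈ twistedGabidulin (L := L) q n k s h η,
          φ ∘ f ∈ twistedGabidulin (L := L) q n k s h η}
      = {φ : L → L | ∃ c : L, c ^ q ^ (Nat.gcd n h) = c ∧ φ = fun x => c * x}) := by
  have : NeZero n := ⟨by omega⟩
  have hkn' : k + 2 ≤ n := by omega
  have hmul (c : L) : IsQEnd q fun x => c * x :=
    ⟨fun x y => mul_add c x y, fun a x _ => mul_left_comm c a x⟩
  have hmid (d : L) : d ^ q ^ (s * k) = d ^ q ^ h ↔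
      d ^ q ^ (Int.gcd (n : ℤ) ((s : ℤ) * (k : ℤ) - (h : ℤ))) = d := by
    rw [pow_q_pow_eq_pow_q_pow_iff_gcd hq hcard, Nat.cast_mul]
  have hright (c : L) : c ^ q ^ h = c ↔ c ^ q ^ (Nat.gcd n h) = c := by
    simpa using pow_q_pow_eq_pow_q_pow_iff_gcd hq hcard c h 0
  constructor <;> ext φ
  · refine ⟨fun ⟨_, hφ⟩ => ?_, ?_⟩
    · obtain ⟨d, hd, rfl⟩ :=
        exists_eq_mul_of_forall_comp_mem_middle hq hcard hs hk2 hkn' hη hnorm hφ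
      exact ⟨d, (hmid d).mp hd, rfl⟩
    · rintro ⟨d, hd, rfl⟩
      exact ⟨hmul d, fun f hf => comp_mul_mem_twistedGabidulin ((hmid d).mpr hd) hf⟩
  · refine ⟨fun ⟨_, hφ⟩ => ?_, ?_⟩
    · obtain ⟨c, hc, rfl⟩ :=
        exists_eq_mul_of_forall_comp_mem_right hq hcard hs hk2 hkn' hη hnorm hφ
      exact ⟨c, (hright c).mp hc, rfl⟩
    · rintro ⟨c, hc, rfl⟩
      exact ⟨hmul c, fun f hf => mul_comp_mem_twistedGabidulin ((hright c).mpr hc) hf⟩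
end

section
/- Let D be a dimensional dual hyperoval of rank n over F_q with ambient space V = ⟨D⟩. Then the kernel of the associated translation structure, i.e., the set of additive endomorphisms μ of V with X^μ ⊆ X for all X ∈ D, is isomorphic to F_q (it consists exactly of the scalar maps λ·1_V, λ ∈ F_q). -/
/-!
For `X ∈ D`, the `q^{n-1} + ⋯ + q + 1` other members meet `X` in lines any two of which meet
only in `0`, so their `q^n - 1` nonzero points exhaust `X ∖ {0}`. Hence a `μ` stabilizing every
member maps each nonzero `v ∈ X` into `X ⊓ Y = ⟨v⟩` for some `Y`: every vector is an eigenvector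
of `μ`. An additive map with this property on a space of dimension at least `2` is a scalar
(compare the eigenvalues of `v`, `w` and `v + w` for independent `v`, `w`); the scalars of two
members agree on their common line, and the members span `V`.
-/

open Module Submodule

section ScalarOnSubspace

variable {K M : Type*} [Field K] [AddCommGroup M] [Module K M]

theorem AddMonoidHom.smul_eq_of_linearIndependent (f : M →+ M) {x y : M}
    (hxy : LinearIndependent K ![x, y]) {a b c : K} (hx : f x = a • x) (hy : f y = b • y)
    (hsum : f (x + y) = c • (x + y)) : a = b := by
  have hcomb : (a - c) • x + (b - c) • y = 0 := by
    rw [map_add, hx, hy] at hsum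
    rw [sub_smul, sub_smul]
    linear_combination (norm := module) hsum
  obtain ⟨hac, hbc⟩ := LinearIndependent.pair_iff.mp hxy _ _ hcomb
  exact (sub_eq_zero.mp hac).trans (sub_eq_zero.mp hbc).symm

theorem Submodule.exists_mem_notMem_span_singleton_pair {W : Submodule K M}
    (hW : 1 < finrank K W) (x y : M) : ∃ z ∈ W, z ∉ K ∙ x ∧ z ∉ K ∙ y := by
  have hnot_le (u : M) : ¬W ≤ K ∙ u := fun hle =>
    (Submodule.finrank_mono hle).not_gt <| hW.trans_le' <|
      (finrank_span_le_card ({u} : Set M)).trans (by simp)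
  by_contra! h
  exact (AddSubgroupClass.subset_union.mp fun z hz => (em _).imp id (h z hz)).elim
    (hnot_le x) (hnot_le y)

theorem AddMonoidHom.exists_eq_smul_of_mem_span_singleton (f : M →+ M) {W : Submodule K M}
    (hW : 1 < finrank K W) (hf : ∀ x ∈ W, f x ∈ K ∙ x) : ∃ c : K, ∀ x ∈ W, f x = c • x := by
  have heigen (x : M) (hx : x ∈ W) : ∃ a : K, f x = a • x :=
    (mem_span_singleton.mp (hf x hx)).imp fun _ h => h.symm
  have hsame {x z : M} (hx : x ∈ W) (hx0 : x ≠ 0) (hz : z ∈ W) (hzx : z ∉ K ∙ x) {a b : K}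
      (ha : f x = a • x) (hb : f z = b • z) : a = b := by
    obtain ⟨c, hc⟩ := heigen (x + z) (add_mem hx hz)
    refine f.smul_eq_of_linearIndependent ((LinearIndependent.pair_iff' hx0).mpr fun t ht => ?_)
      ha hb hc
    exact hzx (ht ▸ smul_mem _ t (mem_span_singleton_self x))
  obtain ⟨x₀, hx₀, hx₀0⟩ := W.exists_mem_ne_zero_of_ne_bot (by rintro rfl; simp at hW)
  obtain ⟨c, hc⟩ := heigen x₀ hx₀
  refine ⟨c, fun x hx => ?_⟩
  rcases eq_or_ne x 0 with rfl | hx0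
  · simp
  obtain ⟨a, ha⟩ := heigen x hx
  obtain ⟨z, hz, hzx, hzx₀⟩ := exists_mem_notMem_span_singleton_pair hW x x₀
  obtain ⟨b, hb⟩ := heigen z hz
  rw [ha, hsame hx hx0 hz hzx ha hb, hsame hx₀ hx₀0 hz hzx₀ hc hb]

theorem AddMonoidHom.exists_eq_smul_of_biSup_eq_top (f : M →+ M) {D : Set (Submodule K M)}
    (hD : ∀ X ∈ D, ∀ Y ∈ D, X ≠ Y → X ⊓ Y ≠ ⊥) (hf : ∀ X ∈ D, ∃ c : K, ∀ v ∈ X, f v = c • v)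
    (hspan : ⨆ X ∈ D, X = ⊤) : ∃ c : K, ∀ v, f v = c • v := by
  rcases D.eq_empty_or_nonempty with rfl | ⟨X₀, hX₀⟩
  · have : Subsingleton M :=
      (subsingleton_iff K).mp (subsingleton_iff_bot_eq_top.mp (by simpa using hspan))
    exact ⟨0, fun v => Subsingleton.elim _ _⟩
  obtain ⟨c, hc⟩ := hf X₀ hX₀
  have hagree (X : D) : ∀ v ∈ (X : Submodule K M), f v = c • v := by
    obtain ⟨a, ha⟩ := hf X X.2
    rcases eq_or_ne (X : Submodule K M) X₀ with hX | hne
    · exact hX ▸ hc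
    obtain ⟨z, hz, hz0⟩ := exists_mem_ne_zero_of_ne_bot (hD X X.2 X₀ hX₀ hne)
    obtain rfl : a = c := smul_left_injective K hz0 ((ha z hz.1).symm.trans (hc z hz.2))
    exact ha
  refine ⟨c, fun v => iSup_induction (fun X : D => (X : Submodule K M))
    (motive := fun v => f v = c • v) ?_ hagree (by simp)
    fun x y hx hy => by rw [map_add, hx, hy, smul_add]⟩
  rw [← iSup_subtype'' D fun X => X] at hspan
  exact hspan ▸ mem_top

end ScalarOnSubspace

section FiniteField

variable {F V : Type*} [Field F] [Fintype F] [AddCommGroup V] [Module F V]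

theorem Submodule.ncard_eq_card_pow_finrank (W : Submodule F V) [Module.Finite F W] :
    (W : Set V).ncard = Fintype.card F ^ finrank F W := by
  rw [← Nat.card_coe_set_eq, SetLike.coe_sort_coe, Module.natCard_eq_pow_finrank (K := F),
    Nat.card_eq_fintype_card]

theorem Submodule.exists_mem_of_finrank_inf_eq_one {X : Submodule F V} [Module.Finite F X]
    {E : Set (Submodule F V)} (hE : E.Finite) (hline : ∀ Y ∈ E, finrank F ↥(X ⊓ Y) = 1)
    (hdisj : ∀ Y ∈ E, ∀ Z ∈ E, Y ≠ Z → X ⊓ Y ⊓ Z = ⊥)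
    (hcard : E.ncard = ∑ i ∈ Finset.range (finrank F X), Fintype.card F ^ i)
    {v : V} (hv : v ∈ X) (hv0 : v ≠ 0) : ∃ Y ∈ E, v ∈ Y := by
  set q := Fintype.card F
  have : Finite X := Module.finite_of_finite F
  have hXfin : (X : Set V).Finite := Set.toFinite _
  let pts (W : Submodule F V) : Set V := (W : Set V) \ {0}
  have hpts (W : Submodule F V) [Module.Finite F W] : (pts W).ncard = q ^ finrank F W - 1 := by
    rw [Set.ncard_sdiff_singleton_of_mem W.zero_mem, W.ncard_eq_card_pow_finrank]
  have hsub : ⋃ Y ∈ E, pts (X ⊓ Y) ⊆ pts X :=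
    Set.iUnion₂_subset fun Y _ => Set.sdiff_subset_sdiff_left inf_le_left
  have hpairwise : E.PairwiseDisjoint fun Y => pts (X ⊓ Y) := fun Y hY Z hZ hYZ =>
    Set.disjoint_left.mpr fun w hwY hwZ => hwY.2 <| by
      have hw : w ∈ X ⊓ Y ⊓ Z := ⟨hwY.1, hwZ.1.2⟩
      rwa [hdisj Y hY Z hZ hYZ, mem_bot] at hw
  have hcount : (pts X).ncard = (⋃ Y ∈ E, pts (X ⊓ Y)).ncard := by
    have hfin (Y : Submodule F V) : (pts (X ⊓ Y)).Finite := hXfin.subset fun w hw => hw.1.1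
    have hgeom := geom_sum_mul_add (q - 1) (finrank F X)
    rw [tsub_add_cancel_of_le (show 1 ≤ q from Fintype.card_pos), ← hcard] at hgeom
    calc (pts X).ncard = E.ncard * (q - 1) := by rw [hpts X]; omega
      _ = ∑ᶠ Y ∈ E, (pts (X ⊓ Y)).ncard := by
        rw [finsum_mem_eq_finite_toFinset_sum _ hE, Set.ncard_eq_toFinset_card _ hE,
          Finset.sum_congr rfl fun Y hY => by rw [hpts, hline Y (hE.mem_toFinset.mp hY), pow_one],
          Finset.sum_const, smul_eq_mul]
      _ = (⋃ Y ∈ E, pts (X ⊓ Y)).ncard := (hE.ncard_biUnion (fun Y _ => hfin Y) hpairwise).symm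
  have hcover := Set.eq_of_subset_of_ncard_le hsub hcount.le hXfin.sdiff
  have hvX : v ∈ pts X := ⟨hv, hv0⟩
  rw [← hcover] at hvX
  obtain ⟨Y, hY, hvY⟩ := Set.mem_iUnion₂.mp hvX
  exact ⟨Y, hY, hvY.1.2⟩

structure IsDualHyperoval (n : ℕ) (D : Set (Submodule F V)) : Prop where
  two_le : 2 ≤ n
  finrank_eq : ∀ X ∈ D, finrank F X = n
  finrank_inf : ∀ X ∈ D, ∀ Y ∈ D, X ≠ Y → finrank F ↥(X ⊓ Y) = 1
  inf_inf_eq_bot : ∀ X ∈ D, ∀ Y ∈ D, ∀ Z ∈ D, X ≠ Y → Y ≠ Z → X ≠ Z → X ⊓ Y ⊓ Z = ⊥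
  ncard_eq : D.ncard = (∑ i ∈ Finset.range n, Fintype.card F ^ i) + 1

namespace IsDualHyperoval

variable {n : ℕ} {D : Set (Submodule F V)}

theorem one_lt_finrank (hD : IsDualHyperoval n D) {X : Submodule F V} (hX : X ∈ D) :
    1 < finrank F X := by
  rw [hD.finrank_eq X hX]
  exact hD.two_le

theorem inf_ne_bot (hD : IsDualHyperoval n D) {X Y : Submodule F V} (hX : X ∈ D) (hY : Y ∈ D)
    (hXY : X ≠ Y) : X ⊓ Y ≠ ⊥ := fun hbot => by
  have hline := hD.finrank_inf X hX Y hY hXY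
  rw [hbot, finrank_bot] at hline
  exact zero_ne_one hline

theorem exists_mem_ne_of_ne_zero (hD : IsDualHyperoval n D) {X : Submodule F V} (hX : X ∈ D)
    {v : V} (hv : v ∈ X) (hv0 : v ≠ 0) : ∃ Y ∈ D, Y ≠ X ∧ v ∈ Y := by
  have hDfin : D.Finite := Set.finite_of_ncard_ne_zero (by rw [hD.ncard_eq]; omega)
  have : Module.Finite F X := Module.finite_of_finrank_pos (hD.one_lt_finrank hX).le
  obtain ⟨Y, ⟨hY, hYX⟩, hvY⟩ := exists_mem_of_finrank_inf_eq_one (E := D \ {X}) hDfin.sdiff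
    (fun Y hY => hD.finrank_inf X hX Y hY.1 (Ne.symm hY.2))
    (fun Y hY Z hZ hYZ => hD.inf_inf_eq_bot X hX Y hY.1 Z hZ.1 (Ne.symm hY.2) hYZ (Ne.symm hZ.2))
    (by rw [Set.ncard_sdiff_singleton_of_mem hX, hD.ncard_eq, hD.finrank_eq X hX,
      Nat.add_sub_cancel])
    hv hv0
  exact ⟨Y, hY, hYX, hvY⟩

theorem apply_mem_span_singleton (hD : IsDualHyperoval n D) {μ : V →+ V}
    (hμ : ∀ X ∈ D, ∀ v ∈ X, μ v ∈ X) {X : Submodule F V} (hX : X ∈ D) {v : V} (hv : v ∈ X) :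
    μ v ∈ F ∙ v := by
  rcases eq_or_ne v 0 with rfl | hv0
  · simp
  obtain ⟨Y, hY, hYX, hvY⟩ := hD.exists_mem_ne_of_ne_zero hX hv hv0
  rw [← eq_span_singleton_of_mem_of_finrank_eq_one (hD.finrank_inf X hX Y hY hYX.symm) ⟨hv, hvY⟩
    hv0]
  exact ⟨hμ X hX v hv, hμ Y hY v hvY⟩

end IsDualHyperoval

end FiniteField

/-- Let `D` be a dimensional dual hyperoval of rank `n` over `F_q` whose
ambient space is `V`. Then the kernel of the associated translation structure (the additive
endomorphisms of `V` stabilizing each member of `D`) consists exactly of the scalar maps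
`λ • 1_V`, i.e. it is isomorphic to `F_q`. -/
theorem dho_kernel {n : ℕ} {F V : Type*} [Field F] [Fintype F]
    [AddCommGroup V] [Module F V]
    (hn : 2 ≤ n) (D : Set (Submodule F V))
    (hrank : ∀ X ∈ D, Module.finrank F X = n)
    (hD1 : ∀ X ∈ D, ∀ Y ∈ D, X ≠ Y → Module.finrank F ↥(X ⊓ Y) = 1)
    (hD2 : ∀ X ∈ D, ∀ Y ∈ D, ∀ Z ∈ D, X ≠ Y → Y ≠ Z → X ≠ Z → X ⊓ Y ⊓ Z = ⊥)
    (hD3 : D.ncard = (∑ i ∈ Finset.range n, Fintype.card F ^ i) + 1)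
    (hambient : (⨆ X ∈ D, X) = (⊤ : Submodule F V)) :
    ∀ μ : V →+ V, (∀ X ∈ D, ∀ v ∈ X, μ v ∈ X) ↔ ∃ lam : F, ∀ v, μ v = lam • v := by
  intro μ
  have hD : IsDualHyperoval n D := ⟨hn, hrank, hD1, hD2, hD3⟩
  refine ⟨fun hμ => μ.exists_eq_smul_of_biSup_eq_top (fun X hX Y hY => hD.inf_ne_bot hX hY)
    (fun X hX => ?_) hambient, ?_⟩
  · exact μ.exists_eq_smul_of_mem_span_singleton (hD.one_lt_finrank hX) fun v hv =>
      hD.apply_mem_span_singleton hμ hX hv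
  · rintro ⟨lam, hlam⟩ X _ v hv
    exact hlam v ▸ X.smul_mem lam hv
end

section
/- Let D be a dimensional dual hyperoval of rank n ≥ 3 with ambient space V = F_q^{2n}, let σ be a non-degenerate symmetric bilinear form on V, and let D^† = {X^† : X ∈ D} where X^† = {v ∈ V : σ(x,v) = 0 for all x ∈ X}. Then the kernel of D^†, i.e., the set of additive endomorphisms ε of V with (X^†)^ε ⊆ X^† for all X ∈ D, consists exactly of the scalar maps and is isomorphic to F_q. -/
/-!
An additive `ε` is `𝔽_p`-linear, so for a nonzero `𝔽_p`-linear functional `π` on `F` it has an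
adjoint `ε*` for the nondegenerate `𝔽_p`-bilinear form `π ∘ σ`. On `F`-subspaces `π ∘ σ` and `σ`
have the same orthogonals, and `X^†† = X`, so `ε*` stabilises every member of `D`. Each nonzero
`x ∈ X ∈ D` spans `X ∩ Y` for some other `Y ∈ D` (the `#D - 1` points `X ∩ Y` are distinct and
exactly as many as the points of `X`), so `x` is an eigenvector of `ε*`. An additive map having
every vector of a space of dimension `≥ 2` as eigenvector is a homothety; the scalars on the
pairwise intersecting members agree, and the members span `V`. Hence `ε* = λ`, so `ε = λ`.
-/

open Module Submodule
open LinearMap (BilinForm)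
open LinearMap.BilinForm
open scoped LinearAlgebra.Projectivization

section Homothety

variable {F V : Type*} [Field F] [AddCommGroup V] [Module F V]

theorem AddMonoidHom.apply_eq_smul_of_notMem_span_singleton {f : V →+ V} {x y : V} {c : F}
    (hx : x ≠ 0) (hy : y ∉ F ∙ x) (hfx : f x = c • x) (hfy : f y ∈ F ∙ y)
    (hfxy : f (x + y) ∈ F ∙ (x + y)) : f y = c • y := by
  obtain ⟨b, hb⟩ := mem_span_singleton.mp hfy
  obtain ⟨d, hd⟩ := mem_span_singleton.mp hfxy
  have hxy : LinearIndependent F ![x, y] := (LinearIndependent.pair_iff' hx).mpr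
    fun a ha => hy (ha ▸ smul_mem _ a (mem_span_singleton_self x))
  have hrel : (c - d) • x + (b - d) • y = 0 := by
    rw [f.map_add, hfx, ← hb, smul_add] at hd
    linear_combination (norm := module) -hd
  obtain ⟨hcd, hbd⟩ := LinearIndependent.pair_iff.mp hxy _ _ hrel
  rw [← hb, sub_eq_zero.mp hbd, sub_eq_zero.mp hcd]

theorem AddMonoidHom.exists_eq_smul_of_forall_mem_span_singleton {f : V →+ V}
    {X : Submodule F V} (hX : 1 < finrank F X) (hf : ∀ x ∈ X, f x ∈ F ∙ x) :
    ∃ c : F, ∀ x ∈ X, f x = c • x := by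
  obtain ⟨x₀, hx₀X, hx₀⟩ := exists_mem_ne_zero_of_ne_bot
    (show X ≠ ⊥ by rintro rfl; simp at hX)
  obtain ⟨c, hc⟩ := mem_span_singleton.mp (hf x₀ hx₀X)
  have off_line : ∀ y ∈ X, y ∉ F ∙ x₀ → f y = c • y := fun y hy hyx =>
    f.apply_eq_smul_of_notMem_span_singleton hx₀ hyx hc.symm (hf y hy) (hf _ (X.add_mem hx₀X hy))
  obtain ⟨z, hzX, hzx⟩ : ∃ z ∈ X, z ∉ F ∙ x₀ := by
    by_contra! hle
    have := finrank_mono (show X ≤ F ∙ x₀ from hle)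
    rw [finrank_span_singleton hx₀] at this
    omega
  refine ⟨c, fun y hy => ?_⟩
  by_cases hyx : y ∈ F ∙ x₀
  · have hyz : y + z ∉ F ∙ x₀ := fun h => hzx (by simpa using sub_mem h hyx)
    have := off_line _ (X.add_mem hy hzX) hyz
    rwa [f.map_add, off_line z hzX hzx, smul_add, add_left_inj] at this
  · exact off_line y hy hyx

theorem AddMonoidHom.exists_eq_smul_of_iSup_eq_top {f : V →+ V} {D : Set (Submodule F V)}
    (hD : D.Nonempty) (hmeet : ∀ X ∈ D, ∀ Y ∈ D, X ⊓ Y ≠ ⊥)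
    (hf : ∀ X ∈ D, ∃ c : F, ∀ x ∈ X, f x = c • x) (htop : ⨆ X ∈ D, X = ⊤) :
    ∃ c : F, ∀ v, f v = c • v := by
  obtain ⟨X₀, hX₀⟩ := hD
  obtain ⟨c, hc⟩ := hf X₀ hX₀
  have hc_all : ∀ X ∈ D, ∀ x ∈ X, f x = c • x := by
    intro X hX
    obtain ⟨cX, hcX⟩ := hf X hX
    obtain ⟨z, hz, hz0⟩ := exists_mem_ne_zero_of_ne_bot (hmeet X hX X₀ hX₀)
    have : cX = c := smul_left_injective F hz0 ((hcX z hz.1).symm.trans (hc z hz.2))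
    exact this ▸ hcX
  refine ⟨c, fun v => ?_⟩
  have hv : v ∈ ⨆ X : D, (X : Submodule F V) := by
    rw [iSup_subtype'' D fun X => X, htop]
    exact mem_top
  refine iSup_induction _ (motive := fun v => f v = c • v) hv (fun X x hx => hc_all X X.2 x hx)
    (by simp) fun x y hx hy => ?_
  rw [f.map_add, hx, hy, smul_add]

end Homothety

namespace LinearMap.BilinForm

section RestrictScalars

variable {K F V : Type*} [Field K] [Field F] [Algebra K F] [AddCommGroup V] [Module F V]

theorem forall_apply_eq_zero_of_forall_comp {π : F →ₗ[K] K} (hπ : π 1 ≠ 0) {f : V →ₗ[F] F}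
    {U : Submodule F V} (h : ∀ w ∈ U, π (f w) = 0) : ∀ w ∈ U, f w = 0 := by
  intro w hw
  by_contra hne
  apply hπ
  simpa [hne] using h ((f w)⁻¹ • w) (U.smul_mem _ hw)

variable [Module K V] [IsScalarTower K F V]

def restrictScalarsComp (σ : BilinForm F V) (π : F →ₗ[K] K) : BilinForm K V :=
  (σ.restrictScalars₁₂ K K).compr₂ π

@[simp]
theorem restrictScalarsComp_apply (σ : BilinForm F V) (π : F →ₗ[K] K) (u v : V) :
    σ.restrictScalarsComp π u v = π (σ u v) :=
  rfl

variable {σ : BilinForm F V} {π : F →ₗ[K] K}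

theorem nondegenerate_restrictScalarsComp (hσ : σ.Nondegenerate) (hπ : π 1 ≠ 0) :
    (σ.restrictScalarsComp π).Nondegenerate :=
  ⟨fun u hu => hσ.1 u fun v =>
      forall_apply_eq_zero_of_forall_comp hπ (U := ⊤) (fun v _ => hu v) v trivial,
    fun v hv => hσ.2 v fun u =>
      forall_apply_eq_zero_of_forall_comp hπ (f := σ.flip v) (U := ⊤) (fun u _ => hv u) u trivial⟩

theorem mem_of_isAdjointPair_of_mapsTo_orthogonal [FiniteDimensional F V]
    (hσ : σ.Nondegenerate) (hσr : σ.IsRefl) (hπ : π 1 ≠ 0) {ψ ε : V →ₗ[K] V}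
    (hψ : IsAdjointPair (σ.restrictScalarsComp π) (σ.restrictScalarsComp π) ψ ε)
    {X : Submodule F V} (hX : ∀ v ∈ σ.orthogonal X, ε v ∈ σ.orthogonal X) {x : V}
    (hx : x ∈ X) : ψ x ∈ X := by
  rw [← orthogonal_orthogonal hσ hσr X]
  intro w hw
  refine hσr _ _ (forall_apply_eq_zero_of_forall_comp hπ (f := σ (ψ x)) (fun w hw => ?_) w hw)
  rw [← restrictScalarsComp_apply, hψ, restrictScalarsComp_apply, hX w hw x hx, map_zero]

theorem eq_smul_of_isAdjointPair (hσ : σ.SeparatingRight) (hπ : π 1 ≠ 0) {ψ ε : V →ₗ[K] V}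
    (hψ : IsAdjointPair (σ.restrictScalarsComp π) (σ.restrictScalarsComp π) ψ ε) {c : F}
    (hc : ∀ u, ψ u = c • u) (v : V) : ε v = c • v := by
  rw [← sub_eq_zero]
  refine hσ _ fun u => forall_apply_eq_zero_of_forall_comp hπ (f := σ.flip _) (U := ⊤)
    (fun u _ => ?_) u trivial
  have := hψ u v
  simp only [restrictScalarsComp_apply, hc, map_smul, smul_apply] at this
  simp [map_sub, ← this]

end RestrictScalars

end LinearMap.BilinForm

section DualHyperoval

variable {F V : Type*} [Field F] [Fintype F] [AddCommGroup V] [Module F V]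

structure IsDualHyperoval_s17 (n : ℕ) (D : Set (Submodule F V)) : Prop where
  finrank_eq : ∀ X ∈ D, finrank F X = n
  finrank_inf : ∀ X ∈ D, ∀ Y ∈ D, X ≠ Y → finrank F ↥(X ⊓ Y) = 1
  inf_inf_eq_bot : ∀ X ∈ D, ∀ Y ∈ D, ∀ Z ∈ D, X ≠ Y → Y ≠ Z → X ≠ Z → X ⊓ Y ⊓ Z = ⊥
  ncard_eq : D.ncard = (∑ i ∈ Finset.range n, Fintype.card F ^ i) + 1

namespace IsDualHyperoval_s17

variable [FiniteDimensional F V] {n : ℕ} {D : Set (Submodule F V)}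

theorem exists_ne_mem_of_mem (hD : IsDualHyperoval_s17 n D) {X : Submodule F V} (hX : X ∈ D)
    {x : V} (hx : x ∈ X) (hx0 : x ≠ 0) : ∃ Y ∈ D, Y ≠ X ∧ x ∈ Y := by
  have hline (Y : ↥(D \ {X})) : finrank F ↥((X ⊓ Y).comap X.subtype) = 1 :=
    (comapSubtypeEquivOfLe inf_le_left).finrank_eq.trans
      (hD.finrank_inf X hX Y Y.2.1 (Ne.symm Y.2.2))
  let point (Y : ↥(D \ {X})) : ℙ F X := Projectivization.mk'' _ (hline Y)
  have hpoint (Y : ↥(D \ {X})) : (point Y).submodule.map X.subtype = X ⊓ Y := by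
    simp only [point, Projectivization.submodule_mk'', map_comap_subtype, inf_left_idem]
  have hinj : point.Injective := by
    intro Y Z hYZ
    have hXYZ : X ⊓ Y ≤ Z := (hpoint Y).symm.trans (hYZ ▸ hpoint Z) ▸ inf_le_right
    by_contra hne
    have hbot := hD.inf_inf_eq_bot X hX Y Y.2.1 Z Z.2.1 (Ne.symm Y.2.2)
      (Subtype.coe_ne_coe.mpr hne) (Ne.symm Z.2.2)
    have hXY := hD.finrank_inf X hX Y Y.2.1 (Ne.symm Y.2.2)
    rw [inf_eq_left.mpr hXYZ] at hbot
    rw [hbot, finrank_bot] at hXY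
    exact zero_ne_one hXY
  have hcard : Nat.card (ℙ F X) ≤ Nat.card ↥(D \ {X}) := by
    rw [Projectivization.card_of_finrank F X (hD.finrank_eq X hX), Nat.card_coe_set_eq,
      Set.ncard_sdiff_singleton_of_mem hX, hD.ncard_eq, Nat.card_eq_fintype_card]
    omega
  have : Finite X := Module.finite_of_finite F
  obtain ⟨Y, hY⟩ := (hinj.bijective_of_nat_card_le hcard).2
    (Projectivization.mk F ⟨x, hx⟩ (by simpa using hx0))
  refine ⟨Y, Y.2.1, Y.2.2, (?_ : x ∈ X ⊓ Y).2⟩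
  rw [← hpoint Y, hY, Projectivization.submodule_mk]
  exact ⟨_, mem_span_singleton_self _, rfl⟩

theorem exists_eq_smul_of_mapsTo (hD : IsDualHyperoval_s17 n D) (hn : 2 ≤ n)
    (htop : ⨆ X ∈ D, X = ⊤) {f : V →+ V} (hf : ∀ X ∈ D, ∀ x ∈ X, f x ∈ X) :
    ∃ c : F, ∀ v, f v = c • v := by
  have hline : ∀ X ∈ D, ∀ x ∈ X, f x ∈ F ∙ x := by
    intro X hX x hx
    rcases eq_or_ne x 0 with rfl | hx0
    · simp
    obtain ⟨Y, hY, hYX, hxY⟩ := hD.exists_ne_mem_of_mem hX hx hx0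
    have hXY : F ∙ x = X ⊓ Y := eq_of_le_of_finrank_le
      ((span_singleton_le_iff_mem _ _).mpr ⟨hx, hxY⟩)
      (by rw [hD.finrank_inf X hX Y hY hYX.symm, finrank_span_singleton hx0])
    exact hXY ▸ ⟨hf X hX x hx, hf Y hY x hxY⟩
  refine f.exists_eq_smul_of_iSup_eq_top
    (Set.nonempty_of_ncard_ne_zero (by rw [hD.ncard_eq]; omega)) (fun X hX Y hY hbot => ?_)
    (fun X hX => f.exists_eq_smul_of_forall_mem_span_singleton
      (by rw [hD.finrank_eq X hX]; omega) (hline X hX)) htop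
  rcases eq_or_ne X Y with rfl | hXY
  · have := hD.finrank_eq X hX
    rw [inf_idem] at hbot
    rw [hbot, finrank_bot] at this
    omega
  · have := hD.finrank_inf X hX Y hY hXY
    rw [hbot, finrank_bot] at this
    omega

end IsDualHyperoval_s17

end DualHyperoval

theorem dho_dagger_kernel_general {n : ℕ} {F V : Type*} [Field F] [Fintype F]
    [AddCommGroup V] [Module F V] [FiniteDimensional F V]
    (hn : 3 ≤ n)
    (σ : V →ₗ[F] V →ₗ[F] F)
    (hsym : ∀ v w : V, σ v w = σ w v)
    (hnd : ∀ v : V, (∀ w : V, σ v w = 0) → v = 0)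
    (D : Set (Submodule F V))
    (hrank : ∀ X ∈ D, Module.finrank F X = n)
    (hD1 : ∀ X ∈ D, ∀ Y ∈ D, X ≠ Y → Module.finrank F ↥(X ⊓ Y) = 1)
    (hD2 : ∀ X ∈ D, ∀ Y ∈ D, ∀ Z ∈ D, X ≠ Y → Y ≠ Z → X ≠ Z → X ⊓ Y ⊓ Z = ⊥)
    (hD3 : D.ncard = (∑ i ∈ Finset.range n, Fintype.card F ^ i) + 1)
    (hambient : (⨆ X ∈ D, X) = (⊤ : Submodule F V)) :
    ∀ ε : V →+ V,
      (∀ X ∈ D, ∀ v : V, (∀ x ∈ X, σ x v = 0) → ∀ x ∈ X, σ x (ε v) = 0)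
        ↔ ∃ lam : F, ∀ v, ε v = lam • v := by
  intro ε
  refine ⟨fun hker => ?_, fun ⟨c, hc⟩ X _ v hv x hx => by rw [hc, map_smul, hv x hx, smul_zero]⟩
  obtain ⟨p, _⟩ := CharP.exists F
  have : Fact p.Prime := ⟨CharP.char_is_prime F p⟩
  let : Algebra (ZMod p) F := ZMod.algebra F p
  let : Module (ZMod p) V := Module.compHom V (algebraMap (ZMod p) F)
  have : IsScalarTower (ZMod p) F V := ⟨fun k a v => by rw [Algebra.smul_def, mul_smul]; rfl⟩
  have : Finite V := Module.finite_of_finite F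
  obtain ⟨π, hπ⟩ : ∃ π : F →ₗ[ZMod p] ZMod p, π 1 ≠ 0 :=
    Projective.exists_dual_ne_zero _ one_ne_zero
  have hrefl : σ.IsRefl := fun u v h => hsym u v ▸ h
  have hσ : σ.Nondegenerate := hrefl.nondegenerate_iff_separatingLeft.mpr hnd
  have hB := nondegenerate_restrictScalarsComp hσ hπ
  have hψ := isAdjointPairLeftAdjointOfNondegenerate (restrictScalarsComp σ π) hB
    (ε.toZModLinearMap p)
  obtain ⟨c, hc⟩ := IsDualHyperoval_s17.exists_eq_smul_of_mapsTo ⟨hrank, hD1, hD2, hD3⟩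
    (by omega) hambient (f := leftAdjointOfNondegenerate (restrictScalarsComp σ π) hB _)
    fun X hX x hx => mem_of_isAdjointPair_of_mapsTo_orthogonal hσ hrefl hπ hψ (hker X hX) hx
  exact ⟨c, eq_smul_of_isAdjointPair hσ.2 hπ hψ hc⟩

/-- Let `D` be a DHO of rank `n ≥ 3` with ambient space `V = F_q^{2n}`,
`σ` a non-degenerate symmetric bilinear form on `V`, and `D^† = {X^† : X ∈ D}` where
`X^†` is the `σ`-orthogonal complement of `X`. Then the kernel of `D^†` (the additive
endomorphisms `ε` of `V` with `(X^†)^ε ⊆ X^†` for all `X ∈ D`) consists exactly of the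
scalar maps, hence is isomorphic to `F_q`. -/
theorem dho_dagger_kernel {n : ℕ} {F V : Type*} [Field F] [Fintype F]
    [AddCommGroup V] [Module F V] [FiniteDimensional F V]
    (hn : 3 ≤ n) (hV : Module.finrank F V = 2 * n)
    (σ : V →ₗ[F] V →ₗ[F] F)
    (hsym : ∀ v w : V, σ v w = σ w v)
    (hnd : ∀ v : V, (∀ w : V, σ v w = 0) → v = 0)
    (D : Set (Submodule F V))
    (hrank : ∀ X ∈ D, Module.finrank F X = n)
    (hD1 : ∀ X ∈ D, ∀ Y ∈ D, X ≠ Y → Module.finrank F ↥(X ⊓ Y) = 1)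
    (hD2 : ∀ X ∈ D, ∀ Y ∈ D, ∀ Z ∈ D, X ≠ Y → Y ≠ Z → X ≠ Z → X ⊓ Y ⊓ Z = ⊥)
    (hD3 : D.ncard = (∑ i ∈ Finset.range n, Fintype.card F ^ i) + 1)
    (hambient : (⨆ X ∈ D, X) = (⊤ : Submodule F V)) :
    ∀ ε : V →+ V,
      (∀ X ∈ D, ∀ v : V, (∀ x ∈ X, σ x v = 0) → ∀ x ∈ X, σ x (ε v) = 0)
        ↔ ∃ lam : F, ∀ v, ε v = lam • v :=
  dho_dagger_kernel_general hn σ hsym hnd D hrank hD1 hD2 hD3 hambient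
end
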